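/- arXiv:2003.05446 — 5 statements merged into one kernel-verified Lean document; each statement's English description precedes it below -/
import Mathlib

section
/- Under the setup CTX-S2 with p+1 ≥ pβ, there exists a constant C = C(s,p,β) > 1 such that for every t>0 and every x ∈ ℝ the positive part of the second difference of m is uniformly integrable against the fractional kernel: ∫₀^∞ max(m(t,x+h) + m(t,x−h) − 2m(t,x), 0) / h^{1+2s} dh ≤ C. In particular, wherever the fractional Laplacian (−Δ)^s m(t,x) = (1/2)∫_ℝ (2m(t,x) − m(t,x+h) − m(t,x−h))/|h|^{1+2s} dh is defined (possibly as a value in (−∞, +∞]), it satisfies (−Δ)^s m(t,x) ≥ −C. -/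
open MeasureTheory Filter

/-- The fractional Laplacian `(-Δ)^s v (x) = (1/2) ∫_ℝ (2v(x) − v(x+h) − v(x−h))/|h|^{1+2s} dh`. -/
noncomputable def fracLap (s : ℝ) (v : ℝ → ℝ) (x : ℝ) : ℝ :=
  (1 / 2) * ∫ h : ℝ, (2 * v x - v (x + h) - v (x - h)) / |h| ^ (1 + 2 * s)

/-- CTX-S2: the initial profile `v₀(x) = 1` for `x ≤ 1`, `x^{−p}` for `x > 1`. -/
noncomputable def v0F (p x : ℝ) : ℝ := if x ≤ 1 then 1 else x ^ (-p)

/-- CTX-S2: `w(t,x) = [v₀(x)^{1−β} − γ(β−1)t]^{−1/(β−1)}`. -/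
noncomputable def wF (β γ p t x : ℝ) : ℝ :=
  (v0F p x ^ (1 - β) - γ * (β - 1) * t) ^ (-(1 / (β - 1)))

/-- CTX-S2: `x₀(t) = [1 + γ(β−1)t]^{1/(p(β−1))}`. -/
noncomputable def x0F (β γ p t : ℝ) : ℝ := (1 + γ * (β - 1) * t) ^ (1 / (p * (β - 1)))

/-- CTX-S2: the supersolution profile `m(t,x)`. -/
noncomputable def mF (β γ p t x : ℝ) : ℝ := if x ≤ x0F β γ p t then 1 else wF β γ p t x


open Set


namespace ClaimAux

noncomputable def W (q a r y : ℝ) : ℝ := (y ^ q - a) ^ (-r)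
noncomputable def Wd (q a r y : ℝ) : ℝ := -(r*q) * (y ^ (q-1) * (y ^ q - a) ^ (-r-1))
noncomputable def Wdd (q a r y : ℝ) : ℝ :=
  r*q*(1-q) * (y^(q-2) * (y^q-a)^(-r-1)) + r*q*q*(r+1) * (y^(2*q-2) * (y^q-a)^(-r-2))

variable {q a r y : ℝ}

lemma hasDerivAt_W (hy : (1:ℝ) ≤ y) (hg : 0 < y ^ q - a) :
    HasDerivAt (W q a r) (Wd q a r y) y := by
  have hy0 : y ≠ 0 := by linarith
  have h1 : HasDerivAt (fun z : ℝ => z ^ q - a) (q * y ^ (q-1)) y :=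
    (Real.hasDerivAt_rpow_const (Or.inl hy0)).sub_const a
  have h2 : HasDerivAt (fun z : ℝ => z ^ (-r)) (-r * (y^q - a) ^ (-r-1)) (y^q - a) :=
    Real.hasDerivAt_rpow_const (Or.inl hg.ne')
  have := h2.comp y h1
  exact this.congr_deriv (by unfold Wd; ring)

lemma hasDerivAt_Wd (hy : (1:ℝ) ≤ y) (hg : 0 < y ^ q - a) :
    HasDerivAt (Wd q a r) (Wdd q a r y) y := by
  have hy0 : y ≠ 0 := by linarith
  have hy0' : (0:ℝ) < y := by linarith
  have h1 : HasDerivAt (fun z : ℝ => z ^ q - a) (q * y ^ (q-1)) y :=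
    (Real.hasDerivAt_rpow_const (Or.inl hy0)).sub_const a
  have hA : HasDerivAt (fun z : ℝ => z ^ (q-1)) ((q-1) * y ^ (q-1-1)) y :=
    Real.hasDerivAt_rpow_const (Or.inl hy0)
  have hBo : HasDerivAt (fun z : ℝ => z ^ (-r-1)) ((-r-1) * (y^q - a) ^ (-r-1-1)) (y^q - a) :=
    Real.hasDerivAt_rpow_const (Or.inl hg.ne')
  have hB := hBo.comp y h1
  have := (hA.mul hB).const_mul (-(r*q))
  simp only [Function.comp_apply] at this
  refine this.congr_deriv ?_
  unfold Wdd
  have e1 : q - 1 - 1 = q - 2 := by ring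
  have e2 : -r - 1 - 1 = -r - 2 := by ring
  have e3 : y ^ (2*q-2) = y ^ (q-1) * y ^ (q-1) := by
    rw [← Real.rpow_add hy0']; ring_nf
  rw [e1, e2, e3]; ring

lemma W_pos (hg : 0 < y ^ q - a) : 0 < W q a r y := Real.rpow_pos_of_pos hg _

lemma W_le_one (hr : 0 < r) (hg : 1 ≤ y ^ q - a) : W q a r y ≤ 1 :=
  Real.rpow_le_one_of_one_le_of_nonpos hg (by linarith)

lemma Wd_nonpos (hq : 0 < q) (hr : 0 < r) (hy : (1:ℝ) ≤ y) (hg : 0 < y ^ q - a) :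
    Wd q a r y ≤ 0 := by
  unfold Wd
  have h1 : (0:ℝ) ≤ y ^ (q-1) := Real.rpow_nonneg (by linarith) _
  have h2 : (0:ℝ) ≤ (y^q - a) ^ (-r-1) := Real.rpow_nonneg hg.le _
  have h3 : (0:ℝ) ≤ r * q * (y ^ (q-1) * (y^q - a) ^ (-r-1)) :=
    mul_nonneg (mul_nonneg hr.le hq.le) (mul_nonneg h1 h2)
  linarith

lemma Wdd_nonneg (hq0 : 0 < q) (hq1 : q ≤ 1) (hr : 0 < r) (hy : (1:ℝ) ≤ y)
    (hg : 0 < y ^ q - a) : 0 ≤ Wdd q a r y := by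
  unfold Wdd
  have h1 : (0:ℝ) ≤ y ^ (q-2) := Real.rpow_nonneg (by linarith) _
  have h2 : (0:ℝ) ≤ (y^q - a) ^ (-r-1) := Real.rpow_nonneg hg.le _
  have h3 : (0:ℝ) ≤ y ^ (2*q-2) := Real.rpow_nonneg (by linarith) _
  have h4 : (0:ℝ) ≤ (y^q - a) ^ (-r-2) := Real.rpow_nonneg hg.le _
  have c1 : (0:ℝ) ≤ r*q*(1-q) := mul_nonneg (mul_nonneg hr.le hq0.le) (by linarith)
  have c2 : (0:ℝ) ≤ r*q*q*(r+1) := by positivity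
  have := mul_nonneg c1 (mul_nonneg h1 h2)
  have := mul_nonneg c2 (mul_nonneg h3 h4)
  linarith

lemma Wdd_le (hq0 : 0 < q) (hq1 : q ≤ 1) (hr : 0 < r) (hy : (1:ℝ) ≤ y)
    (hg : 1 ≤ y ^ q - a) : Wdd q a r y ≤ r*q*(1-q) + r*q*q*(r+1) := by
  unfold Wdd
  have h1 : y ^ (q-2) ≤ 1 := Real.rpow_le_one_of_one_le_of_nonpos hy (by linarith)
  have h2 : (y^q - a) ^ (-r-1) ≤ 1 := Real.rpow_le_one_of_one_le_of_nonpos hg (by linarith)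
  have h3 : y ^ (2*q-2) ≤ 1 := Real.rpow_le_one_of_one_le_of_nonpos hy (by linarith)
  have h4 : (y^q - a) ^ (-r-2) ≤ 1 := Real.rpow_le_one_of_one_le_of_nonpos hg (by linarith)
  have n1 : (0:ℝ) ≤ y ^ (q-2) := Real.rpow_nonneg (by linarith) _
  have n2 : (0:ℝ) ≤ (y^q - a) ^ (-r-1) := Real.rpow_nonneg (by linarith) _
  have n3 : (0:ℝ) ≤ y ^ (2*q-2) := Real.rpow_nonneg (by linarith) _
  have n4 : (0:ℝ) ≤ (y^q - a) ^ (-r-2) := Real.rpow_nonneg (by linarith) _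
  have c1 : (0:ℝ) ≤ r*q*(1-q) := mul_nonneg (mul_nonneg hr.le hq0.le) (by linarith)
  have c2 : (0:ℝ) ≤ r*q*q*(r+1) := by positivity
  have m1 : y ^ (q-2) * (y^q - a) ^ (-r-1) ≤ 1 := mul_le_one₀ h1 n2 h2
  have m2 : y ^ (2*q-2) * (y^q - a) ^ (-r-2) ≤ 1 := mul_le_one₀ h3 n4 h4
  have t1 := mul_le_mul_of_nonneg_left m1 c1
  have t2 := mul_le_mul_of_nonneg_left m2 c2
  linarith


lemma Wd_lip (hq0 : 0 < q) (hq1 : q ≤ 1) (hr : 0 < r) {x0 : ℝ} (hx0 : 1 ≤ x0)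
    (hgx : ∀ y ∈ Ici x0, 1 ≤ y ^ q - a) :
    ∀ u ∈ Ici x0, ∀ v ∈ Ici x0, u ≤ v →
      Wd q a r v - Wd q a r u ≤ (r*q*(1-q) + r*q*q*(r+1)) * (v - u) := by
  set K := r*q*(1-q) + r*q*q*(r+1) with hK
  have hyIci : ∀ y ∈ Ici x0, (1:ℝ) ≤ y := fun y hy => le_trans hx0 hy
  have hgpos : ∀ y ∈ Ici x0, (0:ℝ) < y ^ q - a := fun y hy => lt_of_lt_of_le one_pos (hgx y hy)
  have hFd : ∀ y ∈ Ici x0, HasDerivAt (fun z => K * z - Wd q a r z) (K - Wdd q a r y) y := by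
    intro y hy
    exact ((hasDerivAt_id y).const_mul K).sub (hasDerivAt_Wd (hyIci y hy) (hgpos y hy)) |>.congr_deriv (by ring)
  have hmono : MonotoneOn (fun z => K * z - Wd q a r z) (Ici x0) := by
    apply monotoneOn_of_deriv_nonneg (convex_Ici x0)
    · intro y hy
      exact ((hFd y hy).continuousAt).continuousWithinAt
    · intro y hy
      rw [interior_Ici] at hy
      exact ((hFd y (mem_Ici.mpr (le_of_lt (mem_Ioi.mp hy)))).differentiableAt).differentiableWithinAt
    · intro y hy
      rw [interior_Ici] at hy
      rw [(hFd y (mem_Ici.mpr (le_of_lt (mem_Ioi.mp hy)))).deriv]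
      have := Wdd_le hq0 hq1 hr (hyIci y (mem_Ici.mpr (le_of_lt (mem_Ioi.mp hy)))) (hgx y (mem_Ici.mpr (le_of_lt (mem_Ioi.mp hy))))
      linarith
  intro u hu v hv huv
  have := hmono hu hv huv
  simp only at this
  linarith

lemma taylor_upper {x0 K : ℝ} {f φ : ℝ → ℝ}
    (hfd : ∀ y ∈ Ici x0, HasDerivAt f (φ y) y)
    (hlip : ∀ u ∈ Ici x0, ∀ v ∈ Ici x0, u ≤ v → φ v - φ u ≤ K * (v - u)) :
    ∀ x ∈ Ici x0, ∀ y ∈ Ici x0, f y ≤ f x + φ x * (y - x) + K/2 * (y-x)^2 := by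
  intro x hx y hy
  set F : ℝ → ℝ := fun z => f x + φ x * (z - x) + K/2*(z-x)^2 - f z with hFdef
  have hFd : ∀ z ∈ Ici x0, HasDerivAt F (φ x + K*(z-x) - φ z) z := by
    intro z hz
    have hid : HasDerivAt (fun w : ℝ => w - x) 1 z := (hasDerivAt_id z).sub_const x
    have hsq : HasDerivAt (fun w : ℝ => (w-x)^2) ((2:ℕ) * (z-x)^1 * 1) z := hid.pow 2
    have h1 : HasDerivAt (fun w => f x + φ x * (w - x) + K/2*(w-x)^2 - f w)
        ((φ x * 1 + K/2 * ((2:ℕ)*(z-x)^1*1)) - φ z) z :=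
      (((hid.const_mul (φ x)).const_add (f x)).add (hsq.const_mul (K/2))).sub (hfd z hz)
    exact h1.congr_deriv (by push_cast; ring)
  rcases le_total x y with hxy | hxy
  · have hmono : MonotoneOn F (Ici x) := by
      apply monotoneOn_of_deriv_nonneg (convex_Ici x)
      · intro z hz
        exact ((hFd z (mem_Ici.mpr (le_trans (mem_Ici.mp hx) (mem_Ici.mp hz)))).continuousAt).continuousWithinAt
      · intro z hz
        rw [interior_Ici] at hz
        exact ((hFd z (mem_Ici.mpr (le_trans (mem_Ici.mp hx) (le_of_lt (mem_Ioi.mp hz))))).differentiableAt).differentiableWithinAt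
      · intro z hz
        rw [interior_Ici] at hz
        rw [(hFd z (mem_Ici.mpr (le_trans (mem_Ici.mp hx) (le_of_lt (mem_Ioi.mp hz))))).deriv]
        have := hlip x hx z (mem_Ici.mpr (le_trans (mem_Ici.mp hx) (le_of_lt (mem_Ioi.mp hz)))) (le_of_lt hz)
        linarith
    have h0 := hmono (self_mem_Ici) (hxy : x ≤ y) hxy
    have hFx : F x = 0 := by simp [hFdef]
    simp only [hFdef] at h0 hFx
    linarith
  · have hanti : AntitoneOn F (Icc x0 x) := by
      apply antitoneOn_of_deriv_nonpos (convex_Icc x0 x)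
      · intro z hz
        exact ((hFd z hz.1).continuousAt).continuousWithinAt
      · intro z hz
        rw [interior_Icc] at hz
        exact ((hFd z (mem_Ici.mpr (le_of_lt hz.1))).differentiableAt).differentiableWithinAt
      · intro z hz
        rw [interior_Icc] at hz
        rw [(hFd z (mem_Ici.mpr (le_of_lt hz.1))).deriv]
        have := hlip z (mem_Ici.mpr (le_of_lt hz.1)) x hx (le_of_lt hz.2)
        linarith
    have h0 := hanti (⟨hy, hxy⟩ : y ∈ Icc x0 x) (⟨hx, le_refl x⟩ : x ∈ Icc x0 x) hxy
    have hFx : F x = 0 := by simp [hFdef]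
    simp only [hFdef] at h0 hFx
    linarith


lemma W_antitoneOn (hq0 : 0 < q) (hr : 0 < r) {x0 : ℝ} (hx0 : 1 ≤ x0)
    (hgx : ∀ y ∈ Ici x0, 1 ≤ y ^ q - a) : AntitoneOn (W q a r) (Ici x0) := by
  have hyIci : ∀ y ∈ Ici x0, (1:ℝ) ≤ y := fun y hy => le_trans hx0 hy
  have hgpos : ∀ y ∈ Ici x0, (0:ℝ) < y ^ q - a := fun y hy => lt_of_lt_of_le one_pos (hgx y hy)
  apply antitoneOn_of_deriv_nonpos (convex_Ici x0)
  · intro y hy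
    exact ((hasDerivAt_W (hyIci y hy) (hgpos y hy)).continuousAt).continuousWithinAt
  · intro y hy
    rw [interior_Ici] at hy
    exact ((hasDerivAt_W (hyIci y (mem_Ici.mpr (le_of_lt (mem_Ioi.mp hy)))) (hgpos y (mem_Ici.mpr (le_of_lt (mem_Ioi.mp hy))))).differentiableAt).differentiableWithinAt
  · intro y hy
    rw [interior_Ici] at hy
    rw [(hasDerivAt_W (hyIci y (mem_Ici.mpr (le_of_lt (mem_Ioi.mp hy)))) (hgpos y (mem_Ici.mpr (le_of_lt (mem_Ioi.mp hy))))).deriv]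
    exact Wd_nonpos hq0 hr (hyIci y (mem_Ici.mpr (le_of_lt (mem_Ioi.mp hy)))) (hgpos y (mem_Ici.mpr (le_of_lt (mem_Ioi.mp hy))))

end ClaimAux


namespace ClaimAux2
open ClaimAux

variable {β γ p t : ℝ}

lemma beta_pos (hβ : 1 < β) (hp : 0 < p) (hγ : 0 < γ) (ht : 0 < t) :
    0 < p*(β-1) ∧ 0 < 1/(β-1) ∧ 0 < γ*(β-1)*t := by
  have h1 : 0 < β - 1 := by linarith
  refine ⟨by positivity, by positivity, by positivity⟩

lemma x0_pow (hβ : 1 < β) (hp : 0 < p) (hγ : 0 < γ) (ht : 0 < t) :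
    (x0F β γ p t) ^ (p*(β-1)) = 1 + γ*(β-1)*t := by
  obtain ⟨hq0, hr0, ha0⟩ := beta_pos hβ hp hγ ht
  rw [x0F, ← Real.rpow_mul (by linarith : (0:ℝ) ≤ 1 + γ*(β-1)*t),
    one_div_mul_cancel hq0.ne', Real.rpow_one]

lemma x0_ge_one (hβ : 1 < β) (hp : 0 < p) (hγ : 0 < γ) (ht : 0 < t) :
    1 ≤ x0F β γ p t := by
  obtain ⟨hq0, hr0, ha0⟩ := beta_pos hβ hp hγ ht
  rw [x0F]
  apply Real.one_le_rpow (by linarith) (by positivity)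

lemma g_ge (hβ : 1 < β) (hp : 0 < p) (hγ : 0 < γ) (ht : 0 < t)
    {y : ℝ} (hy : x0F β γ p t ≤ y) : 1 ≤ y ^ (p*(β-1)) - γ*(β-1)*t := by
  obtain ⟨hq0, hr0, ha0⟩ := beta_pos hβ hp hγ ht
  have hx1 : 1 ≤ x0F β γ p t := x0_ge_one hβ hp hγ ht
  have h1 : (x0F β γ p t) ^ (p*(β-1)) ≤ y ^ (p*(β-1)) :=
    Real.rpow_le_rpow (by linarith) hy hq0.le
  rw [x0_pow hβ hp hγ ht] at h1
  linarith

lemma mF_eq_W (hβ : 1 < β) (hp : 0 < p) (hγ : 0 < γ) (ht : 0 < t)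
    {y : ℝ} (hy : x0F β γ p t ≤ y) :
    mF β γ p t y = W (p*(β-1)) (γ*(β-1)*t) (1/(β-1)) y := by
  obtain ⟨hq0, hr0, ha0⟩ := beta_pos hβ hp hγ ht
  have hx1 : 1 ≤ x0F β γ p t := x0_ge_one hβ hp hγ ht
  by_cases hle : y ≤ x0F β γ p t
  · have hyy : y = x0F β γ p t := le_antisymm hle hy
    rw [mF, if_pos hle, W, hyy, x0_pow hβ hp hγ ht]
    norm_num
  · push_neg at hle
    have hy1 : 1 < y := lt_of_le_of_lt hx1 hle
    rw [mF, if_neg (not_le.mpr hle), wF, v0F, if_neg (not_le.mpr hy1), W]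
    rw [← Real.rpow_mul (by linarith : (0:ℝ) ≤ y)]
    ring_nf

lemma mF_pos (hβ : 1 < β) (hp : 0 < p) (hγ : 0 < γ) (ht : 0 < t) (y : ℝ) :
    0 < mF β γ p t y := by
  obtain ⟨hq0, hr0, ha0⟩ := beta_pos hβ hp hγ ht
  by_cases hle : y ≤ x0F β γ p t
  · rw [mF, if_pos hle]; norm_num
  · push_neg at hle
    rw [mF_eq_W hβ hp hγ ht (le_of_lt hle)]
    exact W_pos (by have := g_ge hβ hp hγ ht (le_of_lt hle); linarith)

lemma mF_le_one (hβ : 1 < β) (hp : 0 < p) (hγ : 0 < γ) (ht : 0 < t) (y : ℝ) :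
    mF β γ p t y ≤ 1 := by
  obtain ⟨hq0, hr0, ha0⟩ := beta_pos hβ hp hγ ht
  by_cases hle : y ≤ x0F β γ p t
  · rw [mF, if_pos hle]
  · push_neg at hle
    rw [mF_eq_W hβ hp hγ ht (le_of_lt hle)]
    exact W_le_one hr0 (g_ge hβ hp hγ ht (le_of_lt hle))

lemma mF_antitone (hβ : 1 < β) (hp : 0 < p) (hγ : 0 < γ) (ht : 0 < t) :
    Antitone (mF β γ p t) := by
  obtain ⟨hq0, hr0, ha0⟩ := beta_pos hβ hp hγ ht
  have hx1 : 1 ≤ x0F β γ p t := x0_ge_one hβ hp hγ ht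
  have hW := W_antitoneOn (a := γ*(β-1)*t) hq0 hr0 hx1
    (fun y hy => g_ge hβ hp hγ ht hy)
  intro u v huv
  by_cases hu : u ≤ x0F β γ p t
  · have h1 : mF β γ p t u = 1 := by rw [mF]; exact if_pos hu
    rw [h1]
    exact mF_le_one hβ hp hγ ht v
  · push_neg at hu
    have hv : ¬ v ≤ x0F β γ p t := by push_neg; linarith
    push_neg at hv
    rw [mF_eq_W hβ hp hγ ht hu.le, mF_eq_W hβ hp hγ ht hv.le]
    exact hW hu.le hv.le huv

lemma secondDiff_le (hβ : 1 < β) (hp : 0 < p) (hγ : 0 < γ) (ht : 0 < t)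
    (hq1 : p*(β-1) ≤ 1) (x h : ℝ) (hh : 0 < h) :
    mF β γ p t (x+h) + mF β γ p t (x-h) - 2 * mF β γ p t x ≤
      (1/(β-1)*(p*(β-1))*(1-p*(β-1)) + 1/(β-1)*(p*(β-1))*(p*(β-1))*(1/(β-1)+1)) * h^2 := by
  obtain ⟨hq0, hr0, ha0⟩ := beta_pos hβ hp hγ ht
  set q := p*(β-1)
  set r := 1/(β-1)
  set a := γ*(β-1)*t
  set x0 := x0F β γ p t with hx0def
  set K := r*q*(1-q) + r*q*q*(r+1) with hKdef
  have hK0 : 0 ≤ K := by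
    have c1 : (0:ℝ) ≤ r*q*(1-q) := mul_nonneg (mul_nonneg hr0.le hq0.le) (by linarith)
    have c2 : (0:ℝ) ≤ r*q*q*(r+1) := by positivity
    linarith
  have hx1 : 1 ≤ x0 := x0_ge_one hβ hp hγ ht
  have hgx : ∀ y ∈ Ici x0, 1 ≤ y ^ q - a := fun y hy => g_ge hβ hp hγ ht hy
  have hfd : ∀ y ∈ Ici x0, HasDerivAt (W q a r) (Wd q a r y) y := fun y hy =>
    hasDerivAt_W (le_trans hx1 hy) (by have := hgx y hy; linarith)
  have hlip := Wd_lip (a := a) hq0 hq1 hr0 hx1 hgx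
  have T := taylor_upper hfd hlip
  by_cases hx : x ≤ x0
  · have h1 := mF_le_one hβ hp hγ ht (x+h)
    have h2 := mF_le_one hβ hp hγ ht (x-h)
    have h3 : mF β γ p t x = 1 := by rw [mF]; exact if_pos hx
    nlinarith
  · push_neg at hx
    have hxI : x ∈ Ici x0 := hx.le
    have hmx : mF β γ p t x = W q a r x := mF_eq_W hβ hp hγ ht hx.le
    have hxh : x + h ∈ Ici x0 := by simp only [mem_Ici]; linarith
    have hmxh : mF β γ p t (x+h) = W q a r (x+h) := mF_eq_W hβ hp hγ ht hxh
    have T1 := T x hxI (x+h) hxh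
    have hWd0 : Wd q a r x ≤ 0 :=
      Wd_nonpos hq0 hr0 (le_trans hx1 hx.le) (by have := hgx x hxI; linarith)
    by_cases hxmh : x - h ≤ x0
    · have hm2 : mF β γ p t (x-h) = 1 := by rw [mF]; exact if_pos hxmh
      have hW0 : W q a r x0 = 1 := by
        rw [W, hx0def, x0_pow hβ hp hγ ht]
        simp only [a, add_sub_cancel_right, Real.one_rpow]
      have T2 := T x hxI x0 self_mem_Ici
      have hsq : (x0 - x)^2 ≤ h^2 := by nlinarith
      have hprod : Wd q a r x * (h + (x0 - x)) ≤ 0 :=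
        mul_nonpos_of_nonpos_of_nonneg hWd0 (by linarith)
      rw [hmxh, hm2, hmx]
      nlinarith
    · push_neg at hxmh
      have hxmhI : x - h ∈ Ici x0 := hxmh.le
      have hm2 : mF β γ p t (x-h) = W q a r (x-h) := mF_eq_W hβ hp hγ ht hxmh.le
      have T2 := T x hxI (x-h) hxmhI
      rw [hmxh, hm2, hmx]
      nlinarith

end ClaimAux2

/-- Claim 2.2: uniform bound on the fractional Laplacian of `m` from below. -/
theorem mF_fracLap_bounded
    (s β p γ : ℝ) (hs0 : 0 < s) (hs1 : s < 1) (hβ : 1 < β) (hp : 0 < p) (hγ : 0 < γ)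
    (hpβ : p * β ≤ p + 1) :
    ∃ C : ℝ, 1 < C ∧
      (∀ t > (0 : ℝ), ∀ x : ℝ,
        IntegrableOn
          (fun h : ℝ =>
            max (mF β γ p t (x + h) + mF β γ p t (x - h) - 2 * mF β γ p t x) 0 / h ^ (1 + 2 * s))
          (Set.Ioi (0 : ℝ)) ∧
        (∫ h in Set.Ioi (0 : ℝ),
            max (mF β γ p t (x + h) + mF β γ p t (x - h) - 2 * mF β γ p t x) 0 / h ^ (1 + 2 * s))
          ≤ C) ∧
      (∀ t > (0 : ℝ), ∀ x : ℝ,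
        Integrable
          (fun h : ℝ =>
            (2 * mF β γ p t x - mF β γ p t (x + h) - mF β γ p t (x - h)) / |h| ^ (1 + 2 * s)) →
        -C ≤ fracLap s (mF β γ p t) x) := by
  classical
  have hb1 : 0 < β - 1 := by linarith
  set q := p*(β-1) with hqdef
  set r := 1/(β-1) with hrdef
  set K := r*q*(1-q) + r*q*q*(r+1) with hKdef
  have hq0 : 0 < q := by rw [hqdef]; positivity
  have hq1 : q ≤ 1 := by
    have : p*(β-1) = p*β - p := by ring
    rw [hqdef, this]; linarith
  have hr0 : 0 < r := by rw [hrdef]; positivity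
  have hK0 : 0 ≤ K := by
    have c1 : (0:ℝ) ≤ r*q*(1-q) := mul_nonneg (mul_nonneg hr0.le hq0.le) (by linarith)
    have c2 : (0:ℝ) ≤ r*q*q*(r+1) := by positivity
    rw [hKdef]; linarith
  have hs2 : 0 < 2 - 2*s := by linarith
  have h12s : (0:ℝ) ≤ 1 + 2*s := by linarith
  set B : ℝ → ℝ := fun h => if h ≤ 1 then K * h^(1-2*s) else 2*h^(-(1+2*s)) with hBdef
  -- integrability of the majorant
  have hBint1 : IntegrableOn B (Ioc 0 1) := by
    have h1 : IntegrableOn (fun h : ℝ => K * h^(1-2*s)) (Ioc 0 1) := by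
      have := (intervalIntegral.intervalIntegrable_rpow' (a := 0) (b := 1)
        (by linarith : (-1:ℝ) < 1-2*s))
      exact ((intervalIntegrable_iff_integrableOn_Ioc_of_le zero_le_one).mp this).const_mul K
    apply h1.congr_fun ?_ measurableSet_Ioc
    intro h hh
    simp only [hBdef, if_pos hh.2]
  have hBint2 : IntegrableOn B (Ioi 1) := by
    have h1 : IntegrableOn (fun h : ℝ => 2 * h^(-(1+2*s))) (Ioi 1) :=
      (integrableOn_Ioi_rpow_of_lt (by linarith) one_pos).const_mul 2
    apply h1.congr_fun ?_ measurableSet_Ioi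
    intro h hh
    simp only [hBdef, if_neg (not_le.mpr (mem_Ioi.mp hh))]
  have hIoc : Ioc (0:ℝ) 1 ∪ Ioi 1 = Ioi 0 := Ioc_union_Ioi_eq_Ioi zero_le_one
  have hBint : IntegrableOn B (Ioi 0) := by
    rw [← hIoc]; exact hBint1.union hBint2
  have hBval : (∫ h in Ioi (0:ℝ), B h) ≤ K/(2-2*s) + 1/s := by
    rw [← hIoc, setIntegral_union (Ioc_disjoint_Ioi le_rfl) measurableSet_Ioi hBint1 hBint2]
    have e1 : (∫ h in Ioc (0:ℝ) 1, B h) = K/(2-2*s) := by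
      rw [setIntegral_congr_fun measurableSet_Ioc
        (fun h hh => by simp only [hBdef, if_pos hh.2] : EqOn B (fun h : ℝ => K * h^(1-2*s)) (Ioc 0 1))]
      rw [integral_const_mul, ← intervalIntegral.integral_of_le zero_le_one,
        integral_rpow (Or.inl (by linarith : (-1:ℝ) < 1-2*s))]
      rw [Real.one_rpow, Real.zero_rpow (by linarith : (1:ℝ)-2*s+1 ≠ 0),
        show (1:ℝ)-2*s+1 = 2-2*s by ring, sub_zero, mul_one_div]
    have e2 : (∫ h in Ioi (1:ℝ), B h) = 1/s := by
      rw [setIntegral_congr_fun measurableSet_Ioi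
        (fun h hh => by simp only [hBdef, if_neg (not_le.mpr (mem_Ioi.mp hh))] :
          EqOn B (fun h : ℝ => 2 * h^(-(1+2*s))) (Ioi 1))]
      rw [integral_const_mul, integral_Ioi_rpow_of_lt (by linarith) one_pos]
      rw [Real.one_rpow]
      field_simp
      ring
    rw [e1, e2]
  have key : ∀ t > (0:ℝ), ∀ x : ℝ,
      IntegrableOn
        (fun h : ℝ =>
          max (mF β γ p t (x + h) + mF β γ p t (x - h) - 2 * mF β γ p t x) 0 / h ^ (1 + 2 * s))
        (Set.Ioi (0 : ℝ)) ∧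
      (∫ h in Set.Ioi (0 : ℝ),
          max (mF β γ p t (x + h) + mF β γ p t (x - h) - 2 * mF β γ p t x) 0 / h ^ (1 + 2 * s))
        ≤ 1 + K/(2-2*s) + 1/s := by
    intro t ht x
    -- pointwise bound
    have hpt : ∀ h ∈ Ioi (0:ℝ),
        max (mF β γ p t (x + h) + mF β γ p t (x - h) - 2 * mF β γ p t x) 0 / h ^ (1 + 2 * s)
          ≤ B h := by
      intro h hh
      have hh0 : (0:ℝ) < h := hh
      have hDK : mF β γ p t (x+h) + mF β γ p t (x-h) - 2 * mF β γ p t x ≤ K * h^2 := by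
        have := ClaimAux2.secondDiff_le hβ hp hγ ht (by rw [hqdef] at hq1; exact hq1) x h hh0
        rw [← hqdef, ← hrdef, ← hKdef] at this
        exact this
      have hD2 : mF β γ p t (x+h) + mF β γ p t (x-h) - 2 * mF β γ p t x ≤ 2 := by
        have b1 := ClaimAux2.mF_le_one hβ hp hγ ht (x+h)
        have b2 := ClaimAux2.mF_le_one hβ hp hγ ht (x-h)
        have b3 := ClaimAux2.mF_pos hβ hp hγ ht x
        linarith
      have hmax1 : max (mF β γ p t (x+h) + mF β γ p t (x-h) - 2 * mF β γ p t x) 0 ≤ K * h^2 :=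
        max_le hDK (by positivity)
      have hmax2 : max (mF β γ p t (x+h) + mF β γ p t (x-h) - 2 * mF β γ p t x) 0 ≤ 2 :=
        max_le hD2 (by norm_num)
      have he : (0:ℝ) < h^(1+2*s) := Real.rpow_pos_of_pos hh0 _
      by_cases hle : h ≤ 1
      · simp only [hBdef, if_pos hle]
        calc max (mF β γ p t (x+h) + mF β γ p t (x-h) - 2 * mF β γ p t x) 0 / h ^ (1 + 2 * s)
            ≤ (K * h^2) / h ^ (1 + 2 * s) := by gcongr
          _ = K * h^(1-2*s) := by
              rw [← Real.rpow_natCast h 2, mul_div_assoc, ← Real.rpow_sub hh0,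
                show ((2:ℕ):ℝ) - (1+2*s) = 1-2*s by push_cast; ring]
      · simp only [hBdef, if_neg hle]
        rw [Real.rpow_neg hh0.le, ← div_eq_mul_inv]
        gcongr
    -- measurability
    have hmono := (ClaimAux2.mF_antitone hβ hp hγ ht).measurable
    have hmeas : Measurable (fun h : ℝ =>
        max (mF β γ p t (x + h) + mF β γ p t (x - h) - 2 * mF β γ p t x) 0 / h ^ (1 + 2 * s)) := by
      have m1 : Measurable fun h : ℝ => mF β γ p t (x + h) :=
        hmono.comp (measurable_const.add measurable_id)
      have m2 : Measurable fun h : ℝ => mF β γ p t (x - h) :=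
        hmono.comp (measurable_const.sub measurable_id)
      have m3 : Measurable fun h : ℝ => h ^ (1 + 2 * s) :=
        (continuous_id.rpow_const (fun y => Or.inr h12s)).measurable
      exact (((m1.add m2).sub measurable_const).max measurable_const).div m3
    have hfnonneg : ∀ h ∈ Ioi (0:ℝ),
        0 ≤ max (mF β γ p t (x + h) + mF β γ p t (x - h) - 2 * mF β γ p t x) 0 / h ^ (1 + 2 * s) := by
      intro h hh
      exact div_nonneg (le_max_right _ _) (Real.rpow_nonneg (le_of_lt hh) _)
    have hint : IntegrableOn
        (fun h : ℝ =>
          max (mF β γ p t (x + h) + mF β γ p t (x - h) - 2 * mF β γ p t x) 0 / h ^ (1 + 2 * s))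
        (Ioi 0) := by
      apply Integrable.mono hBint hmeas.aestronglyMeasurable
      filter_upwards [ae_restrict_mem measurableSet_Ioi] with h hh
      rw [Real.norm_eq_abs, Real.norm_eq_abs, abs_of_nonneg (hfnonneg h hh)]
      exact le_trans (hpt h hh) (le_abs_self _)
    refine ⟨hint, ?_⟩
    calc (∫ h in Ioi (0:ℝ),
          max (mF β γ p t (x + h) + mF β γ p t (x - h) - 2 * mF β γ p t x) 0 / h ^ (1 + 2 * s))
        ≤ ∫ h in Ioi (0:ℝ), B h := setIntegral_mono_on hint hBint measurableSet_Ioi hpt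
      _ ≤ K/(2-2*s) + 1/s := hBval
      _ ≤ 1 + K/(2-2*s) + 1/s := by linarith
  refine ⟨1 + K/(2-2*s) + 1/s, ?_, key, ?_⟩
  · have h1 : 0 < 1/s := by positivity
    have h2 : 0 ≤ K/(2-2*s) := by positivity
    linarith
  · intro t ht x Hint
    obtain ⟨hIf, hIle⟩ := key t ht x
    have habs : (fun h : ℝ =>
        (2 * mF β γ p t x - mF β γ p t (x + h) - mF β γ p t (x - h)) / |h| ^ (1 + 2 * s))
        = fun h : ℝ => (fun u : ℝ =>
            (2 * mF β γ p t x - mF β γ p t (x + u) - mF β γ p t (x - u)) / u ^ (1 + 2 * s)) |h| := by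
      funext h
      rcases le_or_gt 0 h with h0|h0
      · simp only [abs_of_nonneg h0]
      · simp only [abs_of_neg h0]
        rw [show x + -h = x - h by ring, show x - -h = x + h by ring]
        ring_nf
    have h2C : (∫ h : ℝ,
        (2 * mF β γ p t x - mF β γ p t (x + h) - mF β γ p t (x - h)) / |h| ^ (1 + 2 * s))
        = 2 * ∫ u in Set.Ioi (0:ℝ),
            (2 * mF β γ p t x - mF β γ p t (x + u) - mF β γ p t (x - u)) / u ^ (1 + 2 * s) := by
      rw [habs]
      exact integral_comp_abs (f := fun u : ℝ =>
        (2 * mF β γ p t x - mF β γ p t (x + u) - mF β γ p t (x - u)) / u ^ (1 + 2 * s))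
    have hg0 : IntegrableOn (fun u : ℝ =>
        (2 * mF β γ p t x - mF β γ p t (x + u) - mF β γ p t (x - u)) / u ^ (1 + 2 * s))
        (Set.Ioi (0:ℝ)) := by
      apply (Hint.integrableOn).congr_fun ?_ measurableSet_Ioi
      intro u hu
      simp only
      rw [abs_of_pos hu]
    have hptneg : ∀ u ∈ Set.Ioi (0:ℝ),
        -((2 * mF β γ p t x - mF β γ p t (x + u) - mF β γ p t (x - u)) / u ^ (1 + 2 * s))
          ≤ max (mF β γ p t (x + u) + mF β γ p t (x - u) - 2 * mF β γ p t x) 0 / u ^ (1 + 2 * s) := by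
      intro u hu
      have hu' : (0:ℝ) < u ^ (1 + 2 * s) := Real.rpow_pos_of_pos hu _
      rw [← neg_div]
      apply (div_le_div_iff_of_pos_right hu').mpr
      have := le_max_left (mF β γ p t (x + u) + mF β γ p t (x - u) - 2 * mF β γ p t x) (0:ℝ)
      linarith
    have hup : (∫ u in Set.Ioi (0:ℝ),
        -((2 * mF β γ p t x - mF β γ p t (x + u) - mF β γ p t (x - u)) / u ^ (1 + 2 * s)))
        ≤ 1 + K/(2-2*s) + 1/s :=
      le_trans (setIntegral_mono_on hg0.neg hIf measurableSet_Ioi hptneg) hIle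
    rw [integral_neg] at hup
    simp only [fracLap]
    rw [h2C]
    linarith
end

section
/- Under the setup CTX-S2 with p+1 ≥ pβ, let f : [0,1] → [0,∞) satisfy f(u) ≤ r u^β for all u ∈ [0,1] (with r>0), and let C₁ > 1 be a constant such that (−Δ)^s m(t,x) ≥ −C₁ for all t>0, x ∈ ℝ (as furnished by Claim 2.2). For γ > γ₀ := r + 2C₁ define x_γ(t) := [((γ−r)/C₁)^{(β−1)/β} + γ(β−1)t]^{1/(p(β−1))}. Then x₀(t) < x_γ(t) for all t>0, and for every t>0 and every x with x₀(t) < x ≤ x_γ(t): ∂_t m(t,x) + (−Δ)^s m(t,x) − f(m(t,x)) ≥ 0, i.e. γ w(t,x)^β − f(w(t,x)) + (−Δ)^s m(t,x) ≥ 0. -/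
open MeasureTheory Filter

/-- CTX-S2: the curve `x_γ(t) = [((γ−r)/C₁)^{(β−1)/β} + γ(β−1)t]^{1/(p(β−1))}`. -/
noncomputable def xgammaF (β γ p r C₁ t : ℝ) : ℝ :=
  (((γ - r) / C₁) ^ ((β - 1) / β) + γ * (β - 1) * t) ^ (1 / (p * (β - 1)))

/-- Claim 2.4: the supersolution inequality in the region `x₀(t) < x ≤ x_γ(t)`. -/
theorem mF_supersolution_middle_region
    (s β p γ r C₁ : ℝ) (f : ℝ → ℝ)
    (hs0 : 0 < s) (hs1 : s < 1) (hβ : 1 < β) (hp : 0 < p) (hγpos : 0 < γ)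
    (hpβ : p * β ≤ p + 1)
    (hr : 0 < r)
    (hfnn : ∀ v ∈ Set.Icc (0 : ℝ) 1, 0 ≤ f v)
    (hfle : ∀ v ∈ Set.Icc (0 : ℝ) 1, f v ≤ r * v ^ β)
    (hC₁ : 1 < C₁)
    (hC₁bound : ∀ t > (0 : ℝ), ∀ x : ℝ, -C₁ ≤ fracLap s (mF β γ p t) x)
    (hγ : r + 2 * C₁ < γ) :
    (∀ t > (0 : ℝ), x0F β γ p t < xgammaF β γ p r C₁ t) ∧
    (∀ t > (0 : ℝ), ∀ x : ℝ, x0F β γ p t < x → x ≤ xgammaF β γ p r C₁ t →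
      0 ≤ γ * wF β γ p t x ^ β - f (wF β γ p t x) + fracLap s (mF β γ p t) x) := by
  have hβ1 : (0:ℝ) < β - 1 := by linarith
  have hpβ1 : (0:ℝ) < p * (β - 1) := by positivity
  have hC₁0 : (0:ℝ) < C₁ := by linarith
  have hγr : C₁ < γ - r := by linarith
  have hγr0 : (0:ℝ) < γ - r := by linarith
  have hD1 : (1:ℝ) < (γ - r) / C₁ := (one_lt_div hC₁0).2 hγr
  have hD0 : (0:ℝ) < (γ - r) / C₁ := by linarith
  have hK1 : (1:ℝ) < ((γ - r) / C₁) ^ ((β - 1) / β) := by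
    rw [Real.one_lt_rpow_iff_of_pos hD0]
    exact Or.inl ⟨hD1, by positivity⟩
  constructor
  · intro t ht
    unfold x0F xgammaF
    exact Real.rpow_lt_rpow (by positivity) (by linarith) (by positivity)
  · intro t ht x hx1 hx2
    have hc0 : (0:ℝ) < γ * (β - 1) * t := by positivity
    have hx0pos : (0:ℝ) < x0F β γ p t := Real.rpow_pos_of_pos (by linarith) _
    have hx0gt1 : (1:ℝ) < x0F β γ p t := by
      rw [x0F, Real.one_lt_rpow_iff_of_pos (by linarith)]
      exact Or.inl ⟨by linarith, by positivity⟩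
    have hxgt1 : (1:ℝ) < x := lt_trans hx0gt1 hx1
    have hxpos : (0:ℝ) < x := by linarith
    have hv0 : v0F p x = x ^ (-p) := if_neg (not_le.2 hxgt1)
    have hA : v0F p x ^ (1 - β) = x ^ (p * (β - 1)) := by
      rw [hv0, ← Real.rpow_mul hxpos.le]
      congr 1
      ring
    set c := γ * (β - 1) * t with hc
    set K := ((γ - r) / C₁) ^ ((β - 1) / β) with hKdef
    have hx0pow : x0F β γ p t ^ (p * (β - 1)) = 1 + c := by
      rw [x0F, ← Real.rpow_mul (by linarith), one_div_mul_cancel hpβ1.ne', Real.rpow_one]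
    have hxgpow : xgammaF β γ p r C₁ t ^ (p * (β - 1)) = K + c := by
      rw [xgammaF, ← Real.rpow_mul (by positivity), one_div_mul_cancel hpβ1.ne', Real.rpow_one]
    have hXgt : 1 + c < x ^ (p * (β - 1)) := by
      rw [← hx0pow]
      exact Real.rpow_lt_rpow hx0pos.le hx1 hpβ1
    have hXle : x ^ (p * (β - 1)) ≤ K + c := by
      rw [← hxgpow]
      exact Real.rpow_le_rpow hxpos.le hx2 hpβ1.le
    set A := x ^ (p * (β - 1)) - c with hAdef
    have hA1 : 1 < A := by simp only [hAdef]; linarith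
    have hA0 : 0 < A := by linarith
    have hAK : A ≤ K := by simp only [hAdef]; linarith
    have hw : wF β γ p t x = A ^ (-(1 / (β - 1))) := by
      rw [wF, hA]
    have hw0 : 0 < wF β γ p t x := by rw [hw]; exact Real.rpow_pos_of_pos hA0 _
    have hw1 : wF β γ p t x ≤ 1 := by
      rw [hw]
      exact le_of_lt (Real.rpow_lt_one_of_one_lt_of_neg hA1 (by
        rw [neg_neg_iff_pos]; positivity))
    have hwβ : C₁ / (γ - r) ≤ wF β γ p t x ^ β := by
      have h1 : wF β γ p t x ^ β = A ^ (-(β / (β - 1))) := by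
        rw [hw, ← Real.rpow_mul hA0.le]
        congr 1
        field_simp
      have h2 : K ^ (-(β / (β - 1))) = C₁ / (γ - r) := by
        rw [hKdef, ← Real.rpow_mul hD0.le]
        have : (β - 1) / β * -(β / (β - 1)) = -1 := by
          field_simp
        rw [this, Real.rpow_neg_one, inv_div]
      rw [h1, ← h2]
      exact Real.rpow_le_rpow_of_nonpos hA0 hAK (by
        rw [neg_nonpos]; positivity)
    have hf := hfle (wF β γ p t x) ⟨hw0.le, hw1⟩
    have hfrac := hC₁bound t ht x
    have hkey : C₁ ≤ wF β γ p t x ^ β * (γ - r) := (div_le_iff₀ hγr0).1 hwβ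
    nlinarith [hkey, hf, hfrac]
end

section
/- Let 0<q<1. There exists K(q) > 2 such that for all σ ≥ 0, all K ≥ K(q), all x > x₀ := (1+σ)^{1/q}, and all u ∈ [(x₀ − x)/(Kx), 0], one has 1 − σ/x^q > 0 and ((1+u)^q − 1)/(1 − σ/x^q) ≥ −1/2. -/
/-- Claim 2.5: a real-variable inequality. For `0 < q < 1` there is `K(q) > 2` such that
for all `σ ≥ 0`, `K ≥ K(q)`, `x > x₀ := (1+σ)^{1/q}` and `u ∈ [(x₀−x)/(Kx), 0]`, one has
`1 − σ/x^q > 0` and `((1+u)^q − 1)/(1 − σ/x^q) ≥ −1/2`. -/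
theorem claim_2_5 (q : ℝ) (hq0 : 0 < q) (hq1 : q < 1) :
    ∃ K0 : ℝ, 2 < K0 ∧ ∀ σ ≥ (0 : ℝ), ∀ K ≥ K0, ∀ x : ℝ, (1 + σ) ^ (1 / q) < x →
      ∀ u : ℝ, ((1 + σ) ^ (1 / q) - x) / (K * x) ≤ u → u ≤ 0 →
        0 < 1 - σ / x ^ q ∧ -(1 / 2) ≤ ((1 + u) ^ q - 1) / (1 - σ / x ^ q) := by
  have h2q : 0 < 2 / q := by positivity
  refine ⟨2 / q + 3, by linarith, ?_⟩
  intro σ hσ K hK x hx u hu1 hu2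
  set x₀ : ℝ := (1 + σ) ^ (1 / q) with hx₀def
  have hσ1 : (1 : ℝ) ≤ 1 + σ := by linarith
  have hx₀1 : (1 : ℝ) ≤ x₀ := Real.one_le_rpow hσ1 (by positivity)
  have hxpos : 0 < x := lt_of_le_of_lt (by linarith) hx
  have hx₀q : x₀ ^ q = 1 + σ := by
    rw [hx₀def, ← Real.rpow_mul (by linarith), one_div_mul_cancel hq0.ne', Real.rpow_one]
  have hxq : x₀ ^ q < x ^ q := Real.rpow_lt_rpow (by linarith) hx hq0
  have hxqpos : 0 < x ^ q := Real.rpow_pos_of_pos hxpos q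
  have hσx : σ < x ^ q := by linarith [hxq, hx₀q.le, hx₀q.ge]
  have h1 : 0 < 1 - σ / x ^ q := by
    have := (div_lt_one hxqpos).mpr hσx
    linarith
  refine ⟨h1, ?_⟩
  have hK2q : 2 / q ≤ K := by linarith
  have hKpos : 0 < K := lt_of_lt_of_le h2q hK2q
  have hK1 : (1 : ℝ) ≤ K := by linarith
  have hK0 : K ≠ 0 := hKpos.ne'
  have hx0 : x ≠ 0 := hxpos.ne'
  have heq : (x₀ - x) / (K * x) = -((1 - x₀ / x) / K) := by
    field_simp
    ring_nf
  rw [heq] at hu1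
  have ht1 : x₀ / x < 1 := (div_lt_one hxpos).mpr hx
  have h0t : 0 ≤ 1 - x₀ / x := by linarith
  have hu3 : -u ≤ (1 - x₀ / x) / K := by linarith
  have hupos : 0 < 1 + u := by
    have h1K : (1 - x₀ / x) / K < 1 := by
      rw [div_lt_one hKpos]
      have htpos' : 0 < x₀ / x := by positivity
      linarith
    linarith
  have hB : 1 + u ≤ (1 + u) ^ q := by
    have := Real.rpow_le_rpow_of_exponent_ge hupos (by linarith) hq1.le
    rwa [Real.rpow_one] at this
  have htpos : 0 < x₀ / x := by positivity
  have hBer : (x₀ / x) ^ q ≤ 1 + q * (x₀ / x - 1) := by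
    have := rpow_one_add_le_one_add_mul_self (s := x₀ / x - 1) (by linarith) hq0.le hq1.le
    simpa using this
  have hdiv : (x₀ / x) ^ q = x₀ ^ q / x ^ q :=
    Real.div_rpow (by linarith : (0:ℝ) ≤ x₀) hxpos.le q
  have hσle : σ / x ^ q ≤ (x₀ / x) ^ q := by
    rw [hdiv, hx₀q]
    gcongr
    linarith
  have hkey : q * (1 - x₀ / x) ≤ 1 - σ / x ^ q := by nlinarith [hBer, hσle]
  have h2K : 2 / K ≤ q := by
    rw [div_le_iff₀ hKpos]
    nlinarith [mul_le_mul_of_nonneg_left hK2q hq0.le,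
      mul_div_cancel₀ (2 : ℝ) hq0.ne']
  have hu5 : -2 * u ≤ q * (1 - x₀ / x) := by
    have h2 : (2 : ℝ) / K * (1 - x₀ / x) ≤ q * (1 - x₀ / x) :=
      mul_le_mul_of_nonneg_right h2K h0t
    have h3 : -2 * u ≤ 2 * ((1 - x₀ / x) / K) := by linarith
    calc -2 * u ≤ 2 * ((1 - x₀ / x) / K) := h3
      _ = (2 / K) * (1 - x₀ / x) := by ring
      _ ≤ q * (1 - x₀ / x) := h2
  rw [le_div_iff₀ h1]
  nlinarith [hB, hkey, hu5]
end

section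
/- Under the setup CTX-S3: (a) if 1/2 < s < 1, then there exists C₃ > 0 such that for all t>0 and all x ≤ x_B(t) − 1: (−Δ)^s m(t,x) ≤ −C₃ · v₀'(x_B(t)) · v₀(x_B(t))^{−β} · w(t,x_B(t))^β (where v₀'(y) = −2sd·y^{−2s−1} for y>1); (b) if 0 < s ≤ 1/2, then there exist B₀ > 1/(2d) and C₃ > 0 such that for every B ≥ B₀, all t>0 and all x ≤ x_B(t) − 1: (−Δ)^s m(t,x) ≤ C₃/B². -/
open MeasureTheory Filter

/-- CTX-S3: the initial profile `v₀(x) = d` for `x ≤ 1`, `d·x^{−2s}` for `x > 1`. -/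
noncomputable def v0G (s d x : ℝ) : ℝ := if x ≤ 1 then d else d * x ^ (-(2 * s))

/-- CTX-S3: `w(t,x) = [v₀(x)^{1−β} − γ(β−1)t]^{−1/(β−1)}`. -/
noncomputable def wG (s β γ d t x : ℝ) : ℝ :=
  (v0G s d x ^ (1 - β) - γ * (β - 1) * t) ^ (-(1 / (β - 1)))

/-- CTX-S3: the maximal existence time `T(x) = v₀(x)^{1−β}/(γ(β−1))`. -/
noncomputable def TG (s β γ d x : ℝ) : ℝ := v0G s d x ^ (1 - β) / (γ * (β - 1))

/-- CTX-S3: `x_B(t) = d^{1/(2s)}·[(2B)^{β−1} + γ(β−1)t]^{1/(2s(β−1))}`. -/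
noncomputable def xBG (s β γ d B t : ℝ) : ℝ :=
  d ^ (1 / (2 * s)) * ((2 * B) ^ (β - 1) + γ * (β - 1) * t) ^ (1 / (2 * s * (β - 1)))

/-- CTX-S3: `g(y) = y(1 − By)`. -/
noncomputable def gG (B y : ℝ) : ℝ := y * (1 - B * y)

/-- CTX-S3: the subsolution profile `m(t,x)`. -/
noncomputable def mG (s β γ d B t x : ℝ) : ℝ :=
  if x ≤ xBG s β γ d B t then 1 / (4 * B) else gG B (wG s β γ d t x)

/-- Auxiliary: the slope scale `L = 2s d^{1-β} (2B)^{1-β} x_B^{2s(β-1)-1}`. -/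
noncomputable def LG (s β γ d B t : ℝ) : ℝ :=
  2 * s * d ^ (1 - β) * (2 * B) ^ (1 - β) * xBG s β γ d B t ^ (2 * s * (β - 1) - 1)

private lemma xBG_facts (s β γ d B t : ℝ) (hs0 : 0 < s) (hβ : 1 < β) (hd0 : 0 < d)
    (hB : 1 / (2 * d) < B) (hc : 0 ≤ γ * (β - 1) * t) :
    (2 * (B * d)) ^ (1 / (2 * s)) ≤ xBG s β γ d B t ∧ 1 < xBG s β γ d B t ∧
      d ^ (1 - β) * xBG s β γ d B t ^ (2 * s * (β - 1))
        = (2 * B) ^ (β - 1) + γ * (β - 1) * t := by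
  have hB0 : 0 < B := lt_trans (by positivity) hB
  have h2B : (0:ℝ) < 2 * B := by linarith
  have hβ1 : 0 < β - 1 := by linarith
  have hq0 : 0 < 2 * s * (β - 1) := by positivity
  have hBd : 1 < 2 * (B * d) := by
    rw [div_lt_iff₀ (by positivity)] at hB
    nlinarith
  have hP : (0:ℝ) < (2 * B) ^ (β - 1) := Real.rpow_pos_of_pos h2B _
  have hR : (0:ℝ) < (2 * B) ^ (β - 1) + γ * (β - 1) * t := by linarith
  have hF2 : d ^ (1 - β) * xBG s β γ d B t ^ (2 * s * (β - 1))
      = (2 * B) ^ (β - 1) + γ * (β - 1) * t := by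
    unfold xBG
    rw [Real.mul_rpow (by positivity) (by positivity),
      ← Real.rpow_mul hd0.le, ← Real.rpow_mul hR.le]
    have e1 : 1 / (2 * s) * (2 * s * (β - 1)) = β - 1 := by
      field_simp
    have e2 : 1 / (2 * s * (β - 1)) * (2 * s * (β - 1)) = 1 := by
      field_simp
    rw [e1, e2, Real.rpow_one, ← mul_assoc, ← Real.rpow_add hd0]
    norm_num
  have hF3 : (2 * (B * d)) ^ (1 / (2 * s)) ≤ xBG s β γ d B t := by
    have e0 : (2 : ℝ) * (B * d) = (2 * B) * d := by ring
    rw [e0, Real.mul_rpow h2B.le hd0.le]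
    unfold xBG
    have e1 : (2 * B) ^ (1 / (2 * s)) = ((2 * B) ^ (β - 1)) ^ (1 / (2 * s * (β - 1))) := by
      rw [← Real.rpow_mul h2B.le]
      congr 1
      field_simp
    rw [e1, mul_comm]
    have : ((2 * B) ^ (β - 1)) ^ (1 / (2 * s * (β - 1)))
        ≤ ((2 * B) ^ (β - 1) + γ * (β - 1) * t) ^ (1 / (2 * s * (β - 1))) :=
      Real.rpow_le_rpow hP.le (by linarith) (by positivity)
    have hd' : (0:ℝ) < d ^ (1 / (2 * s)) := Real.rpow_pos_of_pos hd0 _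
    nlinarith [Real.rpow_pos_of_pos hP (1 / (2 * s * (β - 1)))]
  have hX1 : 1 < xBG s β γ d B t := by
    refine lt_of_lt_of_le ?_ hF3
    have h := Real.rpow_lt_rpow (by norm_num : (0:ℝ) ≤ 1) hBd
      (by positivity : (0:ℝ) < 1 / (2 * s))
    rwa [Real.one_rpow] at h
  exact ⟨hF3, hX1, hF2⟩
private lemma one_sub_mul_le_rpow_neg {u r : ℝ} (hu : 0 ≤ u) (hr : 0 ≤ r) :
    1 - r * u ≤ (1 + u) ^ (-r) := by
  have h1u : (0:ℝ) < 1 + u := by linarith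
  rcases le_or_gt (1 - r * u) 0 with h | h
  · exact h.trans (Real.rpow_pos_of_pos h1u _).le
  · have hlog : Real.log (1 + u) ≤ u := by
      have := Real.log_le_sub_one_of_pos h1u; linarith
    have hlog0 : 0 ≤ Real.log (1 + u) := Real.log_nonneg (by linarith)
    have h2 : -(r * u) ≤ Real.log (1 + u) * (-r) := by nlinarith
    calc 1 - r * u ≤ Real.exp (-(r * u)) := by
          have := Real.add_one_le_exp (-(r * u)); linarith
      _ ≤ Real.exp (Real.log (1 + u) * (-r)) := Real.exp_le_exp.mpr h2
      _ = (1 + u) ^ (-r) := (Real.rpow_def_of_pos h1u (-r)).symm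
private lemma f_intOn (s B L : ℝ) (hs0 : 0 < s) (hB : 0 < B) (hL : 0 ≤ L) :
    IntegrableOn (fun u : ℝ => 1 / (2 * B) * min 1 (L * u) ^ 2 * u ^ (-(1 + 2 * s)))
      (Set.Ici (1:ℝ)) := by
  have hmaj : IntegrableOn (fun u : ℝ => 1 / (2 * B) * u ^ (-(1 + 2 * s))) (Set.Ici (1:ℝ)) := by
    rw [integrableOn_Ici_iff_integrableOn_Ioi]
    exact (integrableOn_Ioi_rpow_of_lt (by linarith) one_pos).const_mul _
  have hfmeas : Measurable fun u : ℝ => 1 / (2 * B) * min 1 (L * u) ^ 2 * u ^ (-(1 + 2 * s)) := by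
    fun_prop
  refine Integrable.mono hmaj hfmeas.aestronglyMeasurable.restrict ?_
  refine (ae_restrict_iff' measurableSet_Ici).mpr (ae_of_all _ fun u hu => ?_)
  have hu1 : (1:ℝ) ≤ u := hu
  have hu0 : (0:ℝ) < u := by linarith
  have hrp : 0 ≤ u ^ (-(1 + 2 * s)) := Real.rpow_nonneg hu0.le _
  have hmin0 : 0 ≤ min 1 (L * u) := le_min zero_le_one (by positivity)
  have hmin1 : min 1 (L * u) ≤ 1 := min_le_left _ _
  have hsq : min 1 (L * u) ^ 2 ≤ 1 := by nlinarith
  rw [Real.norm_eq_abs, Real.norm_eq_abs, abs_of_nonneg (by positivity),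
    abs_of_nonneg (by positivity)]
  nlinarith [mul_le_mul_of_nonneg_right hsq hrp, div_nonneg (by norm_num : (0:ℝ) ≤ 1) (by linarith : (0:ℝ) ≤ 2*B)]

private lemma int_bound_a (s B L : ℝ) (hs : 1 / 2 < s) (hs1 : s < 1) (hB : 0 < B) (hL : 0 < L) :
    (∫ u in Set.Ici (1:ℝ), 1 / (2 * B) * min 1 (L * u) ^ 2 * u ^ (-(1 + 2 * s)))
      ≤ L / (2 * B) * (1 / (2 * s - 1)) := by
  have hs0 : (0:ℝ) < s := by linarith
  have hmaj : IntegrableOn (fun u : ℝ => L / (2 * B) * u ^ (-(2 * s))) (Set.Ici (1:ℝ)) := by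
    rw [integrableOn_Ici_iff_integrableOn_Ioi]
    exact (integrableOn_Ioi_rpow_of_lt (by linarith) one_pos).const_mul _
  have hstep : (∫ u in Set.Ici (1:ℝ), 1 / (2 * B) * min 1 (L * u) ^ 2 * u ^ (-(1 + 2 * s)))
      ≤ ∫ u in Set.Ici (1:ℝ), L / (2 * B) * u ^ (-(2 * s)) := by
    refine setIntegral_mono_on (f_intOn s B L hs0 hB hL.le) hmaj measurableSet_Ici ?_
    intro u hu
    have hu1 : (1:ℝ) ≤ u := hu
    have hu0 : (0:ℝ) < u := by linarith
    have hrp : 0 ≤ u ^ (-(1 + 2 * s)) := Real.rpow_nonneg hu0.le _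
    have hmin0 : 0 ≤ min 1 (L * u) := le_min zero_le_one (by positivity)
    have hmin1 : min 1 (L * u) ≤ 1 := min_le_left _ _
    have hminL : min 1 (L * u) ≤ L * u := min_le_right _ _
    have hsq : min 1 (L * u) ^ 2 ≤ L * u := by nlinarith
    have he : u ^ (-(2 * s)) = u ^ (-(1 + 2 * s)) * u := by
      have : u ^ (-(2 * s)) = u ^ (-(1 + 2 * s) + 1) := by congr 1; ring
      rw [this, Real.rpow_add hu0, Real.rpow_one]
    rw [he]
    have h2B : (0:ℝ) < 2 * B := by linarith
    calc 1 / (2 * B) * min 1 (L * u) ^ 2 * u ^ (-(1 + 2 * s))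
        ≤ 1 / (2 * B) * (L * u) * u ^ (-(1 + 2 * s)) := by
          apply mul_le_mul_of_nonneg_right _ hrp
          apply mul_le_mul_of_nonneg_left hsq (by positivity)
      _ = L / (2 * B) * (u ^ (-(1 + 2 * s)) * u) := by ring
  refine hstep.trans (le_of_eq ?_)
  rw [integral_Ici_eq_integral_Ioi, MeasureTheory.integral_const_mul,
    integral_Ioi_rpow_of_lt (by linarith : -(2*s) < -1) one_pos, Real.one_rpow]
  have h1 : 2 * s - 1 ≠ 0 := by intro h; apply absurd hs; linarith [h]
  have h2 : -(2*s) + 1 ≠ 0 := by intro h; apply absurd hs; linarith [h]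
  congr 1
  field_simp
  ring
private lemma int_bound_b (s B L : ℝ) (hs0 : 0 < s) (hs1 : s < 1) (hB : 0 < B) (hL : 0 < L) :
    (∫ u in Set.Ici (1:ℝ), 1 / (2 * B) * min 1 (L * u) ^ 2 * u ^ (-(1 + 2 * s)))
      ≤ 1 / (2 * B) * ((1 / (2 - 2 * s) + 1 / (2 * s)) * L ^ (2 * s)) := by
  have h2B : (0:ℝ) < 2 * B := by linarith
  have hL2s : (0:ℝ) < L ^ (2 * s) := Real.rpow_pos_of_pos hL _
  have hc1 : (0:ℝ) < 2 - 2 * s := by linarith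
  have hint := f_intOn s B L hs0 hB hL.le
  rcases le_or_gt 1 L with hL1 | hL1
  · -- no split needed
    have hmaj : IntegrableOn (fun u : ℝ => 1 / (2 * B) * u ^ (-(1 + 2 * s))) (Set.Ici (1:ℝ)) := by
      rw [integrableOn_Ici_iff_integrableOn_Ioi]
      exact (integrableOn_Ioi_rpow_of_lt (by linarith) one_pos).const_mul _
    have hstep : (∫ u in Set.Ici (1:ℝ), 1 / (2 * B) * min 1 (L * u) ^ 2 * u ^ (-(1 + 2 * s)))
        ≤ ∫ u in Set.Ici (1:ℝ), 1 / (2 * B) * u ^ (-(1 + 2 * s)) := by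
      refine setIntegral_mono_on hint hmaj measurableSet_Ici ?_
      intro u hu
      have hu1 : (1:ℝ) ≤ u := hu
      have hu0 : (0:ℝ) < u := by linarith
      have hrp : 0 ≤ u ^ (-(1 + 2 * s)) := Real.rpow_nonneg hu0.le _
      have hmin0 : 0 ≤ min 1 (L * u) := le_min zero_le_one (by positivity)
      have hmin1 : min 1 (L * u) ≤ 1 := min_le_left _ _
      have hsq : min 1 (L * u) ^ 2 ≤ 1 := by nlinarith
      have := mul_le_mul_of_nonneg_right hsq hrp
      have h1B : (0:ℝ) ≤ 1 / (2 * B) := by positivity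
      calc 1 / (2 * B) * min 1 (L * u) ^ 2 * u ^ (-(1 + 2 * s))
          = 1 / (2 * B) * (min 1 (L * u) ^ 2 * u ^ (-(1 + 2 * s))) := by ring
        _ ≤ 1 / (2 * B) * (1 * u ^ (-(1 + 2 * s))) := mul_le_mul_of_nonneg_left this h1B
        _ = 1 / (2 * B) * u ^ (-(1 + 2 * s)) := by ring
    have hval : (∫ u in Set.Ici (1:ℝ), 1 / (2 * B) * u ^ (-(1 + 2 * s)))
        = 1 / (2 * B) * (1 / (2 * s)) := by
      rw [integral_Ici_eq_integral_Ioi, MeasureTheory.integral_const_mul,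
        integral_Ioi_rpow_of_lt (by linarith : -(1 + 2*s) < -1) one_pos, Real.one_rpow]
      congr 1
      have : -(1 + 2*s) + 1 ≠ 0 := by intro h; apply absurd hs0; linarith [h]
      field_simp
      ring
    have hone : (1:ℝ) ≤ L ^ (2 * s) := by
      calc (1:ℝ) = 1 ^ (2 * s) := (Real.one_rpow _).symm
        _ ≤ L ^ (2 * s) := Real.rpow_le_rpow zero_le_one hL1 (by positivity)
    rw [hval] at hstep
    refine hstep.trans ?_
    have h1 : (0:ℝ) < 1 / (2 - 2 * s) := by positivity
    have h2 : (0:ℝ) < 1 / (2 * s) := by positivity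
    have h3 : (0:ℝ) < 1 / (2 * B) := by positivity
    have h5 : (1 / (2 - 2 * s) + 1 / (2 * s)) * 1
        ≤ (1 / (2 - 2 * s) + 1 / (2 * s)) * L ^ (2 * s) :=
      mul_le_mul_of_nonneg_left hone (by positivity)
    have h4 : 1 / (2 * s) ≤ (1 / (2 - 2 * s) + 1 / (2 * s)) * L ^ (2 * s) := by linarith
    exact mul_le_mul_of_nonneg_left h4 h3.le
  · -- split at L⁻¹
    have hLi : 1 < L⁻¹ := (one_lt_inv₀ hL).mpr hL1
    have hLi0 : (0:ℝ) < L⁻¹ := by positivity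
    have hsub1 : Set.Ioc (1:ℝ) L⁻¹ ⊆ Set.Ici 1 := fun z hz => le_of_lt hz.1
    have hsub2 : Set.Ioi L⁻¹ ⊆ Set.Ici (1:ℝ) := fun z hz => le_of_lt (lt_trans hLi hz)
    have hsplit : (∫ u in Set.Ici (1:ℝ), 1 / (2 * B) * min 1 (L * u) ^ 2 * u ^ (-(1 + 2 * s)))
        = (∫ u in Set.Ioc (1:ℝ) L⁻¹, 1 / (2 * B) * min 1 (L * u) ^ 2 * u ^ (-(1 + 2 * s)))
          + ∫ u in Set.Ioi L⁻¹, 1 / (2 * B) * min 1 (L * u) ^ 2 * u ^ (-(1 + 2 * s)) := by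
      rw [integral_Ici_eq_integral_Ioi, ← Set.Ioc_union_Ioi_eq_Ioi hLi.le,
        setIntegral_union (Set.Ioc_disjoint_Ioi le_rfl) measurableSet_Ioi
          (hint.mono_set hsub1) (hint.mono_set hsub2)]
    -- first piece
    have hmaj1 : IntegrableOn (fun u : ℝ => 1 / (2 * B) * L ^ 2 * u ^ (1 - 2 * s))
        (Set.Ioc (1:ℝ) L⁻¹) := by
      have h := (intervalIntegral.intervalIntegrable_rpow' (a := (1:ℝ)) (b := L⁻¹)
        (by linarith : (-1:ℝ) < 1 - 2 * s)).const_mul (1 / (2 * B) * L ^ 2)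
      rw [intervalIntegrable_iff, Set.uIoc_of_le hLi.le] at h
      exact h
    have hstep1 : (∫ u in Set.Ioc (1:ℝ) L⁻¹, 1 / (2 * B) * min 1 (L * u) ^ 2 * u ^ (-(1 + 2 * s)))
        ≤ ∫ u in Set.Ioc (1:ℝ) L⁻¹, 1 / (2 * B) * L ^ 2 * u ^ (1 - 2 * s) := by
      refine setIntegral_mono_on (hint.mono_set hsub1) hmaj1 measurableSet_Ioc ?_
      intro u hu
      have hu0 : (0:ℝ) < u := lt_trans one_pos hu.1
      have hrp : 0 ≤ u ^ (-(1 + 2 * s)) := Real.rpow_nonneg hu0.le _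
      have hmin0 : 0 ≤ min 1 (L * u) := le_min zero_le_one (by positivity)
      have hminL : min 1 (L * u) ≤ L * u := min_le_right _ _
      have hsq : min 1 (L * u) ^ 2 ≤ (L * u) ^ 2 := by nlinarith
      have he2 : (u:ℝ) ^ (2:ℕ) * u ^ (-(1 + 2 * s)) = u ^ (1 - 2 * s) := by
        rw [← Real.rpow_natCast u 2, ← Real.rpow_add hu0]
        congr 1
        push_cast
        ring
      calc 1 / (2 * B) * min 1 (L * u) ^ 2 * u ^ (-(1 + 2 * s))
          ≤ 1 / (2 * B) * (L * u) ^ 2 * u ^ (-(1 + 2 * s)) := by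
            apply mul_le_mul_of_nonneg_right _ hrp
            apply mul_le_mul_of_nonneg_left hsq (by positivity)
        _ = 1 / (2 * B) * L ^ 2 * (u ^ (2:ℕ) * u ^ (-(1 + 2 * s))) := by ring
        _ = 1 / (2 * B) * L ^ 2 * u ^ (1 - 2 * s) := by rw [he2]
    have hval1 : (∫ u in Set.Ioc (1:ℝ) L⁻¹, 1 / (2 * B) * L ^ 2 * u ^ (1 - 2 * s))
        = 1 / (2 * B) * L ^ 2 * ((L⁻¹ ^ (1 - 2 * s + 1) - 1) / (1 - 2 * s + 1)) := by
      rw [MeasureTheory.integral_const_mul, ← intervalIntegral.integral_of_le hLi.le,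
        integral_rpow (Or.inl (by linarith : (-1:ℝ) < 1 - 2 * s)), Real.one_rpow]
    -- second piece
    have hmaj2 : IntegrableOn (fun u : ℝ => 1 / (2 * B) * u ^ (-(1 + 2 * s))) (Set.Ioi L⁻¹) :=
      (integrableOn_Ioi_rpow_of_lt (by linarith) hLi0).const_mul _
    have hstep2 : (∫ u in Set.Ioi L⁻¹, 1 / (2 * B) * min 1 (L * u) ^ 2 * u ^ (-(1 + 2 * s)))
        ≤ ∫ u in Set.Ioi L⁻¹, 1 / (2 * B) * u ^ (-(1 + 2 * s)) := by
      refine setIntegral_mono_on (hint.mono_set hsub2) hmaj2 measurableSet_Ioi ?_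
      intro u hu
      have hu0 : (0:ℝ) < u := lt_trans hLi0 hu
      have hrp : 0 ≤ u ^ (-(1 + 2 * s)) := Real.rpow_nonneg hu0.le _
      have hmin0 : 0 ≤ min 1 (L * u) := le_min zero_le_one (by positivity)
      have hmin1 : min 1 (L * u) ≤ 1 := min_le_left _ _
      have hsq : min 1 (L * u) ^ 2 ≤ 1 := by nlinarith
      nlinarith [mul_le_mul_of_nonneg_right hsq hrp,
        (by positivity : (0:ℝ) ≤ 1 / (2 * B))]
    have hval2 : (∫ u in Set.Ioi L⁻¹, 1 / (2 * B) * u ^ (-(1 + 2 * s)))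
        = 1 / (2 * B) * (-(L⁻¹ ^ (-(1 + 2 * s) + 1)) / (-(1 + 2 * s) + 1)) := by
      rw [MeasureTheory.integral_const_mul,
        integral_Ioi_rpow_of_lt (by linarith : -(1 + 2*s) < -1) hLi0]
    -- rpow algebra for L⁻¹ powers
    have hLinv : ∀ z : ℝ, (L⁻¹ : ℝ) ^ z = L ^ (-z) := by
      intro z
      rw [← Real.rpow_neg_one L, ← Real.rpow_mul hL.le]
      congr 1
      ring
    have hLsq : L ^ 2 * L ^ (-(1 - 2 * s + 1)) = L ^ (2 * s) := by
      rw [← Real.rpow_natCast L 2, ← Real.rpow_add hL]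
      congr 1
      push_cast
      ring
    -- combine
    rw [hsplit]
    have hb1 : (∫ u in Set.Ioc (1:ℝ) L⁻¹, 1 / (2 * B) * min 1 (L * u) ^ 2 * u ^ (-(1 + 2 * s)))
        ≤ 1 / (2 * B) * (L ^ (2 * s) / (2 - 2 * s)) := by
      refine hstep1.trans ?_
      rw [hval1, hLinv]
      have hA0 : (0:ℝ) < L ^ (-(1 - 2 * s + 1)) := Real.rpow_pos_of_pos hL _
      have hc : (0:ℝ) < 1 - 2 * s + 1 := by linarith
      have hL2 : (0:ℝ) < L ^ 2 := by positivity
      have hkey : L ^ 2 * ((L ^ (-(1 - 2 * s + 1)) - 1) / (1 - 2 * s + 1))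
          ≤ L ^ (2 * s) / (2 - 2 * s) := by
        rw [← hLsq]
        have expand : L ^ 2 * ((L ^ (-(1 - 2 * s + 1)) - 1) / (1 - 2 * s + 1))
            = (L ^ 2 * L ^ (-(1 - 2 * s + 1)) - L ^ 2) / (1 - 2 * s + 1) := by ring
        have e : (2:ℝ) - 2 * s = 1 - 2 * s + 1 := by ring
        rw [expand, e, div_le_div_iff₀ hc hc]
        nlinarith
      calc 1 / (2 * B) * L ^ 2 * ((L ^ (-(1 - 2 * s + 1)) - 1) / (1 - 2 * s + 1))
          = 1 / (2 * B) * (L ^ 2 * ((L ^ (-(1 - 2 * s + 1)) - 1) / (1 - 2 * s + 1))) := by ring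
        _ ≤ 1 / (2 * B) * (L ^ (2 * s) / (2 - 2 * s)) := by
            apply mul_le_mul_of_nonneg_left hkey (by positivity)
    have hb2 : (∫ u in Set.Ioi L⁻¹, 1 / (2 * B) * min 1 (L * u) ^ 2 * u ^ (-(1 + 2 * s)))
        ≤ 1 / (2 * B) * (L ^ (2 * s) / (2 * s)) := by
      refine hstep2.trans (le_of_eq ?_)
      rw [hval2, hLinv]
      have e : -(-(1 + 2 * s) + 1) = 2 * s := by ring
      rw [e]
      have h2s : -(1 + 2 * s) + 1 = -(2 * s) := by ring
      rw [h2s, neg_div_neg_eq]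
    have hsum := add_le_add hb1 hb2
    refine hsum.trans (le_of_eq ?_)
    have hne1 : (2:ℝ) - 2 * s ≠ 0 := by linarith
    have hne2 : (2:ℝ) * s ≠ 0 := by positivity
    field_simp
set_option maxHeartbeats 1000000 in
private lemma core_bound (s β γ d B t x : ℝ)
    (hs0 : 0 < s) (hs1 : s < 1) (hβ : 1 < β) (hq : 2 * s * (β - 1) < 1)
    (hd0 : 0 < d) (hB : 1 / (2 * d) < B) (hc : 0 ≤ γ * (β - 1) * t)
    (hx : x ≤ xBG s β γ d B t - 1) :
    fracLap s (mG s β γ d B t) x ≤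
      ∫ u in Set.Ici (1:ℝ),
        1 / (2 * B) * min 1 (LG s β γ d B t * u) ^ 2 * u ^ (-(1 + 2 * s)) := by
  obtain ⟨hF3, hX1, hF2⟩ := xBG_facts s β γ d B t hs0 hβ hd0 hB hc
  have hB0 : 0 < B := lt_trans (by positivity) hB
  have h2B : (0:ℝ) < 2 * B := by linarith
  have hβ1 : (0:ℝ) < β - 1 := by linarith
  have hq0 : (0:ℝ) < 2 * s * (β - 1) := by positivity
  set X := xBG s β γ d B t with hXdef
  set L := LG s β γ d B t with hLdef
  have hX0 : (0:ℝ) < X := lt_trans one_pos hX1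
  have hP : (0:ℝ) < (2 * B) ^ (β - 1) := Real.rpow_pos_of_pos h2B _
  have hdpow : (0:ℝ) < d ^ (1 - β) := Real.rpow_pos_of_pos hd0 _
  have hL0 : (0:ℝ) < L := by
    rw [hLdef]
    unfold LG
    rw [← hXdef]
    have h1 := Real.rpow_pos_of_pos hX0 (2 * s * (β - 1) - 1)
    have h2 := Real.rpow_pos_of_pos h2B (1 - β)
    positivity
  -- the identity L * (β-1) * (X * (2*B)^(β-1)) = 2*s*(β-1) * ((2*B)^(β-1) + γ*(β-1)*t)
  have hLid : L * (β - 1) * (X * (2 * B) ^ (β - 1))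
      = 2 * s * (β - 1) * ((2 * B) ^ (β - 1) + γ * (β - 1) * t) := by
    rw [hLdef]
    unfold LG
    rw [← hXdef, ← hF2]
    have e1 : X ^ (2 * s * (β - 1) - 1) * X = X ^ (2 * s * (β - 1)) := by
      nth_rewrite 2 [← Real.rpow_one X]
      rw [← Real.rpow_add hX0]
      congr 1
      ring
    have e2 : (2 * B) ^ (1 - β) * (2 * B) ^ (β - 1) = 1 := by
      rw [← Real.rpow_add h2B]
      norm_num
    calc 2 * s * d ^ (1 - β) * (2 * B) ^ (1 - β) * X ^ (2 * s * (β - 1) - 1) * (β - 1)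
          * (X * (2 * B) ^ (β - 1))
        = 2 * s * (β - 1) * d ^ (1 - β) * (X ^ (2 * s * (β - 1) - 1) * X)
          * ((2 * B) ^ (1 - β) * (2 * B) ^ (β - 1)) := by ring
      _ = 2 * s * (β - 1) * (d ^ (1 - β) * X ^ (2 * s * (β - 1))) := by rw [e1, e2]; ring
  -- key bounds on w
  have hrnn : (0:ℝ) ≤ 1 / (β - 1) := by
    apply div_nonneg <;> linarith
  have hPinv : ((2 * B) ^ (β - 1) : ℝ) ^ (-(1 / (β - 1))) = 1 / (2 * B) := by
    rw [← Real.rpow_mul h2B.le]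
    have e : (β - 1) * (-(1 / (β - 1))) = -1 := by field_simp
    rw [e, Real.rpow_neg_one, one_div]
  have hwkey : ∀ y : ℝ, X < y →
      0 < wG s β γ d t y ∧ wG s β γ d t y ≤ 1 / (2 * B) ∧
        1 / (2 * B) - wG s β γ d t y ≤ 1 / (2 * B) * (L * (y - X)) := by
    intro y hy
    have hy1 : (1:ℝ) < y := lt_trans hX1 hy
    have hy0 : (0:ℝ) < y := by linarith
    have hv : v0G s d y = d * y ^ (-(2 * s)) := if_neg (by linarith)
    have hbase_eq : v0G s d y ^ (1 - β) = d ^ (1 - β) * y ^ (2 * s * (β - 1)) := by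
      rw [hv, Real.mul_rpow hd0.le (Real.rpow_nonneg hy0.le _), ← Real.rpow_mul hy0.le]
      congr 2
      ring
    have hXq : X ^ (2 * s * (β - 1)) ≤ y ^ (2 * s * (β - 1)) :=
      Real.rpow_le_rpow hX0.le hy.le hq0.le
    have hbase_ge : (2 * B) ^ (β - 1) ≤ v0G s d y ^ (1 - β) - γ * (β - 1) * t := by
      rw [hbase_eq]
      have h1 : d ^ (1 - β) * X ^ (2 * s * (β - 1)) ≤ d ^ (1 - β) * y ^ (2 * s * (β - 1)) :=
        mul_le_mul_of_nonneg_left hXq hdpow.le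
      rw [hF2] at h1
      linarith
    have hbase0 : (0:ℝ) < v0G s d y ^ (1 - β) - γ * (β - 1) * t := lt_of_lt_of_le hP hbase_ge
    have hw_eq : wG s β γ d t y
        = (v0G s d y ^ (1 - β) - γ * (β - 1) * t) ^ (-(1 / (β - 1))) := rfl
    have hw_pos : 0 < wG s β γ d t y := by
      rw [hw_eq]; exact Real.rpow_pos_of_pos hbase0 _
    have hw_le : wG s β γ d t y ≤ 1 / (2 * B) := by
      rw [hw_eq, ← hPinv]
      exact Real.rpow_le_rpow_of_nonpos hP hbase_ge (neg_nonpos.mpr hrnn)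
    refine ⟨hw_pos, hw_le, ?_⟩
    -- lower bound on w
    have hδ : 0 < y - X := by linarith
    -- concavity: y^q ≤ X^q * (1 + q*(y-X)/X)
    have hconc : y ^ (2 * s * (β - 1))
        ≤ X ^ (2 * s * (β - 1)) * (1 + 2 * s * (β - 1) * ((y - X) / X)) := by
      have hyX : y = X * (1 + (y - X) / X) := by field_simp; ring
      have hd1 : 0 ≤ (y - X) / X := by positivity
      have hbern : (1 + (y - X) / X) ^ (2 * s * (β - 1))
          ≤ 1 + 2 * s * (β - 1) * ((y - X) / X) :=
        rpow_one_add_le_one_add_mul_self (by linarith) hq0.le hq.le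
      calc y ^ (2 * s * (β - 1)) = (X * (1 + (y - X) / X)) ^ (2 * s * (β - 1)) := by
            rw [← hyX]
        _ = X ^ (2 * s * (β - 1)) * (1 + (y - X) / X) ^ (2 * s * (β - 1)) := by
            rw [Real.mul_rpow hX0.le (by linarith)]
        _ ≤ X ^ (2 * s * (β - 1)) * (1 + 2 * s * (β - 1) * ((y - X) / X)) := by
            apply mul_le_mul_of_nonneg_left hbern (Real.rpow_nonneg hX0.le _)
    -- base ≤ P * (1 + L*(β-1)*(y-X))
    have hbase_le : v0G s d y ^ (1 - β) - γ * (β - 1) * t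
        ≤ (2 * B) ^ (β - 1) * (1 + L * (β - 1) * (y - X)) := by
      rw [hbase_eq]
      have h1 : d ^ (1 - β) * y ^ (2 * s * (β - 1))
          ≤ d ^ (1 - β) * X ^ (2 * s * (β - 1)) * (1 + 2 * s * (β - 1) * ((y - X) / X)) := by
        calc d ^ (1 - β) * y ^ (2 * s * (β - 1))
            ≤ d ^ (1 - β) * (X ^ (2 * s * (β - 1)) * (1 + 2 * s * (β - 1) * ((y - X) / X))) :=
              mul_le_mul_of_nonneg_left hconc hdpow.le
          _ = d ^ (1 - β) * X ^ (2 * s * (β - 1)) * (1 + 2 * s * (β - 1) * ((y - X) / X)) := by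
              ring
      rw [hF2] at h1
      -- now pure algebra: (P+c)(1+q δ/X) - c ≤ P(1 + L(β-1)δ) using hLid
      have hpc : 0 ≤ γ * (β - 1) * t := hc
      have e : ((2 * B) ^ (β - 1) + γ * (β - 1) * t) * (2 * s * (β - 1) * ((y - X) / X))
          = (2 * B) ^ (β - 1) * (L * (β - 1) * (y - X)) := by
        have hXne : X ≠ 0 := ne_of_gt hX0
        have hXi : X * X⁻¹ = 1 := mul_inv_cancel₀ hXne
        linear_combination (-(y - X) * X⁻¹) * hLid + ((2 * B) ^ (β - 1) * L * (β - 1) * (y - X)) * hXi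
      nlinarith [h1, e]
    -- now the rpow chain
    have hKδ : 0 ≤ L * (β - 1) * (y - X) := by positivity
    have hrki : (0:ℝ) < 1 + L * (β - 1) * (y - X) := by linarith
    have hw_ge : 1 / (2 * B) * (1 - L * (y - X)) ≤ wG s β γ d t y := by
      have step1 : ((2 * B) ^ (β - 1) * (1 + L * (β - 1) * (y - X))) ^ (-(1 / (β - 1)))
          ≤ wG s β γ d t y := by
        rw [hw_eq]
        exact Real.rpow_le_rpow_of_nonpos hbase0 hbase_le (neg_nonpos.mpr hrnn)
      have step2 : ((2 * B) ^ (β - 1) * (1 + L * (β - 1) * (y - X))) ^ (-(1 / (β - 1)))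
          = 1 / (2 * B) * (1 + L * (β - 1) * (y - X)) ^ (-(1 / (β - 1))) := by
        rw [Real.mul_rpow hP.le hrki.le, hPinv]
      have step3 : 1 - (1 / (β - 1)) * (L * (β - 1) * (y - X))
          ≤ (1 + L * (β - 1) * (y - X)) ^ (-(1 / (β - 1))) :=
        one_sub_mul_le_rpow_neg hKδ hrnn
      have e3 : (1 / (β - 1)) * (L * (β - 1) * (y - X)) = L * (y - X) := by
        field_simp
      rw [e3] at step3
      calc 1 / (2 * B) * (1 - L * (y - X))
          ≤ 1 / (2 * B) * (1 + L * (β - 1) * (y - X)) ^ (-(1 / (β - 1))) := by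
            apply mul_le_mul_of_nonneg_left step3 (by positivity)
        _ = ((2 * B) ^ (β - 1) * (1 + L * (β - 1) * (y - X))) ^ (-(1 / (β - 1))) := step2.symm
        _ ≤ wG s β γ d t y := step1
    have hexp : 1 / (2 * B) * (1 - L * (y - X))
        = 1 / (2 * B) - 1 / (2 * B) * (L * (y - X)) := by ring
    rw [hexp] at hw_ge
    linarith
  -- Δ bounds
  have hΔ : ∀ y : ℝ, 0 ≤ 1 / (4 * B) - mG s β γ d B t y ∧
      1 / (4 * B) - mG s β γ d B t y ≤ 1 / (4 * B) * min 1 (L * max (y - X) 0) ^ 2 := by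
    intro y
    rcases le_or_gt y X with h | h
    · have hm : mG s β γ d B t y = 1 / (4 * B) := by
        unfold mG
        rw [← hXdef, if_pos h]
      rw [hm]
      constructor
      · linarith
      · have : (0:ℝ) ≤ 1 / (4 * B) * min 1 (L * max (y - X) 0) ^ 2 := by positivity
        linarith
    · have hm : mG s β γ d B t y = gG B (wG s β γ d t y) := by
        unfold mG
        rw [← hXdef, if_neg (not_le.mpr h)]
      obtain ⟨hw0, hw1, hw2⟩ := hwkey y h
      have hgg : 1 / (4 * B) - gG B (wG s β γ d t y)
          = B * (1 / (2 * B) - wG s β γ d t y) ^ 2 := by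
        unfold gG
        field_simp
        ring
      have hmax : max (y - X) 0 = y - X := max_eq_left (by linarith)
      have hnn : 0 ≤ 1 / (2 * B) - wG s β γ d t y := by linarith
      have hup : 1 / (2 * B) - wG s β γ d t y ≤ 1 / (2 * B) * min 1 (L * (y - X)) := by
        have h1 : 1 / (2 * B) * min 1 (L * (y - X)) = min (1 / (2 * B) * 1) (1 / (2 * B) * (L * (y - X))) := by
          rcases min_cases 1 (L * (y - X)) with ⟨he, hle⟩ | ⟨he, hle⟩ <;>
            rcases min_cases (1 / (2 * B) * 1) (1 / (2 * B) * (L * (y - X))) with ⟨he2, hle2⟩ | ⟨he2, hle2⟩ <;>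
            rw [he, he2] <;> nlinarith
        rw [h1]
        exact le_min (by linarith) (by linarith)
      rw [hm, hgg]
      constructor
      · positivity
      · rw [hmax]
        have hminnn : 0 ≤ min 1 (L * (y - X)) := le_min zero_le_one (by nlinarith)
        have hsq : (1 / (2 * B) - wG s β γ d t y) ^ 2
            ≤ (1 / (2 * B) * min 1 (L * (y - X))) ^ 2 := by nlinarith
        calc B * (1 / (2 * B) - wG s β γ d t y) ^ 2
            ≤ B * (1 / (2 * B) * min 1 (L * (y - X))) ^ 2 := by nlinarith
          _ = 1 / (4 * B) * min 1 (L * (y - X)) ^ 2 := by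
              field_simp
              ring
  -- m at x
  have hmx : mG s β γ d B t x = 1 / (4 * B) := by
    unfold mG
    rw [← hXdef, if_pos (by linarith)]
  -- majorant function
  set f : ℝ → ℝ := fun u => 1 / (2 * B) * min 1 (L * u) ^ 2 * u ^ (-(1 + 2 * s)) with hfdef
  set Ψ : ℝ → ℝ := Set.indicator (Set.Ici 1) f with hΨdef
  have hfint : IntegrableOn f (Set.Ici (1:ℝ)) := f_intOn s B L hs0 hB0 hL0.le
  have hΨint : Integrable Ψ := by
    rw [hΨdef, integrable_indicator_iff measurableSet_Ici]
    exact hfint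
  have hΨnegint : Integrable fun h : ℝ => Ψ (-h) := hΨint.comp_neg
  -- pointwise bounds on the integrand
  have hnum : ∀ h : ℝ, 2 * mG s β γ d B t x - mG s β γ d B t (x + h) - mG s β γ d B t (x - h)
      = (1 / (4 * B) - mG s β γ d B t (x + h)) + (1 / (4 * B) - mG s β γ d B t (x - h)) := by
    intro h
    rw [hmx]
    ring
  have hFnn : ∀ h : ℝ,
      0 ≤ (2 * mG s β γ d B t x - mG s β γ d B t (x + h) - mG s β γ d B t (x - h))
        / |h| ^ (1 + 2 * s) := by
    intro h
    apply div_nonneg _ (Real.rpow_nonneg (abs_nonneg h) _)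
    rw [hnum h]
    have h1 := (hΔ (x + h)).1
    have h2 := (hΔ (x - h)).1
    linarith
  have hFle : ∀ h : ℝ,
      (2 * mG s β γ d B t x - mG s β γ d B t (x + h) - mG s β γ d B t (x - h))
        / |h| ^ (1 + 2 * s) ≤ Ψ h + Ψ (-h) := by
    intro h
    have hhle := le_abs_self h
    have hhge := neg_abs_le h
    rcases lt_or_ge |h| 1 with habs | habs
    · have hΨ1 : Ψ h = 0 := Set.indicator_of_notMem (by
        simp only [Set.mem_Ici, not_le]; linarith) f
      have hΨ2 : Ψ (-h) = 0 := Set.indicator_of_notMem (by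
        simp only [Set.mem_Ici, not_le]; linarith) f
      have hz1 : mG s β γ d B t (x + h) = 1 / (4 * B) := by
        unfold mG
        rw [← hXdef, if_pos (by linarith)]
      have hz2 : mG s β γ d B t (x - h) = 1 / (4 * B) := by
        unfold mG
        rw [← hXdef, if_pos (by linarith)]
      rw [hΨ1, hΨ2, hz1, hz2, hmx]
      have : 2 * (1 / (4 * B)) - 1 / (4 * B) - 1 / (4 * B) = 0 := by ring
      rw [this, zero_div]
      norm_num
    · have hh0 : (0:ℝ) < |h| := by linarith
      have hpow : (0:ℝ) < |h| ^ (1 + 2 * s) := Real.rpow_pos_of_pos hh0 _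
      -- numerator bound
      have key : ∀ a : ℝ, a ≤ |h| → min 1 (L * max a 0) ^ 2 ≤ min 1 (L * |h|) ^ 2 := by
        intro a hah
        have h0 : 0 ≤ min 1 (L * max a 0) := le_min zero_le_one (by positivity)
        have h1 : min 1 (L * max a 0) ≤ min 1 (L * |h|) := by
          apply min_le_min le_rfl
          apply mul_le_mul_of_nonneg_left (max_le hah hh0.le) hL0.le
        nlinarith
      have hm1 := key (x + h - X) (by linarith)
      have hm2 := key (x - h - X) (by linarith)
      have hb1 := (hΔ (x + h)).2
      have hb2 := (hΔ (x - h)).2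
      have h4B : (0:ℝ) ≤ 1 / (4 * B) := by positivity
      have hnum_le : 2 * mG s β γ d B t x - mG s β γ d B t (x + h) - mG s β γ d B t (x - h)
          ≤ 1 / (2 * B) * min 1 (L * |h|) ^ 2 := by
        rw [hnum h]
        have c1 : 1 / (4 * B) - mG s β γ d B t (x + h)
            ≤ 1 / (4 * B) * min 1 (L * |h|) ^ 2 :=
          hb1.trans (mul_le_mul_of_nonneg_left hm1 h4B)
        have c2 : 1 / (4 * B) - mG s β γ d B t (x - h)
            ≤ 1 / (4 * B) * min 1 (L * |h|) ^ 2 :=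
          hb2.trans (mul_le_mul_of_nonneg_left hm2 h4B)
        have e : 1 / (4 * B) * min 1 (L * |h|) ^ 2 + 1 / (4 * B) * min 1 (L * |h|) ^ 2
            = 1 / (2 * B) * min 1 (L * |h|) ^ 2 := by ring
        linarith
      have hfabs : f |h| = 1 / (2 * B) * min 1 (L * |h|) ^ 2 * |h| ^ (-(1 + 2 * s)) := rfl
      have hstep : (2 * mG s β γ d B t x - mG s β γ d B t (x + h) - mG s β γ d B t (x - h))
          / |h| ^ (1 + 2 * s) ≤ f |h| := by
        rw [hfabs, Real.rpow_neg hh0.le, ← div_eq_mul_inv, div_le_div_iff_of_pos_right hpow]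
        exact hnum_le
      have hΨeq : Ψ h + Ψ (-h) = f |h| := by
        rcases le_abs.mp habs with h1 | h1
        · have e1 : Ψ h = f h := Set.indicator_of_mem h1 f
          have e2 : Ψ (-h) = 0 := Set.indicator_of_notMem (by
            simp only [Set.mem_Ici, not_le]; linarith) f
          rw [e1, e2, abs_of_nonneg (by linarith : (0:ℝ) ≤ h)]
          ring
        · have e1 : Ψ (-h) = f (-h) := Set.indicator_of_mem h1 f
          have e2 : Ψ h = 0 := Set.indicator_of_notMem (by
            simp only [Set.mem_Ici, not_le]; linarith) f
          rw [e1, e2, abs_of_nonpos (by linarith : h ≤ 0)]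
          ring
      rw [hΨeq]
      exact hstep
  -- assemble
  have hmono : (∫ h : ℝ, (2 * mG s β γ d B t x - mG s β γ d B t (x + h)
        - mG s β γ d B t (x - h)) / |h| ^ (1 + 2 * s))
      ≤ ∫ h : ℝ, (Ψ h + Ψ (-h)) :=
    integral_mono_of_nonneg (Filter.Eventually.of_forall hFnn) (hΨint.add hΨnegint)
      (Filter.Eventually.of_forall hFle)
  have hval : (∫ h : ℝ, (Ψ h + Ψ (-h))) = 2 * ∫ u in Set.Ici (1:ℝ), f u := by
    rw [integral_add hΨint hΨnegint, MeasureTheory.integral_neg_eq_self,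
      hΨdef, MeasureTheory.integral_indicator measurableSet_Ici]
    ring
  unfold fracLap
  rw [hval] at hmono
  calc (1:ℝ) / 2 * ∫ h : ℝ, (2 * mG s β γ d B t x - mG s β γ d B t (x + h)
        - mG s β γ d B t (x - h)) / |h| ^ (1 + 2 * s)
      ≤ 1 / 2 * (2 * ∫ u in Set.Ici (1:ℝ), f u) :=
        mul_le_mul_of_nonneg_left hmono (by norm_num)
    _ = ∫ u in Set.Ici (1:ℝ), f u := by ring
private lemma LG_pos (s β γ d B t : ℝ)
    (hs0 : 0 < s) (hβ : 1 < β) (hd0 : 0 < d) (hB : 1 / (2 * d) < B)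
    (hc : 0 ≤ γ * (β - 1) * t) :
    0 < LG s β γ d B t := by
  obtain ⟨hF3, hX1, hF2⟩ := xBG_facts s β γ d B t hs0 hβ hd0 hB hc
  have hB0 : 0 < B := lt_trans (by positivity) hB
  have h2B : (0:ℝ) < 2 * B := by linarith
  have hX0 : (0:ℝ) < xBG s β γ d B t := lt_trans one_pos hX1
  unfold LG
  have h1 := Real.rpow_pos_of_pos hX0 (2 * s * (β - 1) - 1)
  have h2 := Real.rpow_pos_of_pos h2B (1 - β)
  have h3 := Real.rpow_pos_of_pos hd0 (1 - β)
  positivity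

private lemma rhs_id (s β γ d B t : ℝ)
    (hs0 : 0 < s) (hβ : 1 < β) (hd0 : 0 < d) (hB : 1 / (2 * d) < B)
    (hc : 0 ≤ γ * (β - 1) * t) :
    2 * s * d * xBG s β γ d B t ^ (-(2 * s) - 1)
      * v0G s d (xBG s β γ d B t) ^ (-β) * wG s β γ d t (xBG s β γ d B t) ^ β
    = LG s β γ d B t / (2 * B) := by
  obtain ⟨hF3, hX1, hF2⟩ := xBG_facts s β γ d B t hs0 hβ hd0 hB hc
  have hB0 : 0 < B := lt_trans (by positivity) hB
  have h2B : (0:ℝ) < 2 * B := by linarith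
  have hβ1 : (0:ℝ) < β - 1 := by linarith
  set X := xBG s β γ d B t with hXdef
  have hX0 : (0:ℝ) < X := lt_trans one_pos hX1
  have hv : v0G s d X = d * X ^ (-(2 * s)) := if_neg (by linarith)
  have hbase_eq : v0G s d X ^ (1 - β) = d ^ (1 - β) * X ^ (2 * s * (β - 1)) := by
    rw [hv, Real.mul_rpow hd0.le (Real.rpow_nonneg hX0.le _), ← Real.rpow_mul hX0.le]
    congr 2
    ring
  have hPinv : ((2 * B) ^ (β - 1) : ℝ) ^ (-(1 / (β - 1))) = 1 / (2 * B) := by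
    rw [← Real.rpow_mul h2B.le]
    have e : (β - 1) * (-(1 / (β - 1))) = -1 := by field_simp
    rw [e, Real.rpow_neg_one, one_div]
  have hw : wG s β γ d t X = (2 * B)⁻¹ := by
    have hrfl : wG s β γ d t X
        = (v0G s d X ^ (1 - β) - γ * (β - 1) * t) ^ (-(1 / (β - 1))) := rfl
    rw [hrfl, hbase_eq, hF2]
    have e : (2 * B) ^ (β - 1) + γ * (β - 1) * t - γ * (β - 1) * t
        = (2 * B) ^ (β - 1) := by ring
    rw [e, hPinv, one_div]
  have hwβ : wG s β γ d t X ^ β = (2 * B) ^ (-β) := by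
    rw [hw, Real.inv_rpow h2B.le, ← Real.rpow_neg h2B.le]
  have hvβ : v0G s d X ^ (-β) = d ^ (-β) * X ^ (2 * s * β) := by
    rw [hv, Real.mul_rpow hd0.le (Real.rpow_nonneg hX0.le _), ← Real.rpow_mul hX0.le]
    congr 2
    ring
  rw [hwβ, hvβ]
  unfold LG
  rw [← hXdef]
  have e1 : d * d ^ (-β) = d ^ (1 - β) := by
    nth_rewrite 1 [← Real.rpow_one d]
    rw [← Real.rpow_add hd0]
    congr 1 <;> ring
  have e2 : X ^ (-(2 * s) - 1) * X ^ (2 * s * β) = X ^ (2 * s * (β - 1) - 1) := by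
    rw [← Real.rpow_add hX0]
    congr 1 <;> ring
  have e3 : ((2 * B) : ℝ) ^ (-β) = (2 * B) ^ (1 - β) * (2 * B)⁻¹ := by
    rw [← Real.rpow_neg_one (2 * B), ← Real.rpow_add h2B]
    congr 1 <;> ring
  rw [e3, div_eq_mul_inv]
  calc 2 * s * d * X ^ (-(2 * s) - 1) * (d ^ (-β) * X ^ (2 * s * β))
        * ((2 * B) ^ (1 - β) * (2 * B)⁻¹)
      = (d * d ^ (-β)) * (X ^ (-(2 * s) - 1) * X ^ (2 * s * β)) * (2 * s)
        * (2 * B) ^ (1 - β) * (2 * B)⁻¹ := by ring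
    _ = 2 * s * d ^ (1 - β) * (2 * B) ^ (1 - β) * X ^ (2 * s * (β - 1) - 1) * (2 * B)⁻¹ := by
        rw [e1, e2]
        ring

private lemma LG_le (s β γ d B t : ℝ)
    (hs0 : 0 < s) (hβ : 1 < β) (hq : 2 * s * (β - 1) < 1)
    (hd0 : 0 < d) (hB : 1 / (2 * d) < B) (hc : 0 ≤ γ * (β - 1) * t) :
    LG s β γ d B t ^ (2 * s) ≤ (2 * s) ^ (2 * s) * (2 * (B * d))⁻¹ := by
  obtain ⟨hF3, hX1, hF2⟩ := xBG_facts s β γ d B t hs0 hβ hd0 hB hc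
  have hB0 : 0 < B := lt_trans (by positivity) hB
  have h2B : (0:ℝ) < 2 * B := by linarith
  have hβ1 : (0:ℝ) < β - 1 := by linarith
  have hBd1 : (1:ℝ) < 2 * (B * d) := by
    rw [div_lt_iff₀ (by positivity)] at hB
    nlinarith
  have hBd0 : (0:ℝ) < 2 * (B * d) := by linarith
  have hX0 : (0:ℝ) < xBG s β γ d B t := lt_trans one_pos hX1
  have hX0' : (0:ℝ) < (2 * (B * d)) ^ (1 / (2 * s)) := Real.rpow_pos_of_pos hBd0 _
  have hL0 : 0 < LG s β γ d B t := LG_pos s β γ d B t hs0 hβ hd0 hB hc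
  have hstep : LG s β γ d B t ≤ 2 * s * (2 * (B * d)) ^ (-(1 / (2 * s))) := by
    unfold LG
    have h1 : xBG s β γ d B t ^ (2 * s * (β - 1) - 1)
        ≤ ((2 * (B * d)) ^ (1 / (2 * s))) ^ (2 * s * (β - 1) - 1) :=
      Real.rpow_le_rpow_of_nonpos hX0' hF3 (by linarith)
    have h2 : ((2 * (B * d)) ^ (1 / (2 * s))) ^ (2 * s * (β - 1) - 1)
        = (2 * (B * d)) ^ (β - 1) * (2 * (B * d)) ^ (-(1 / (2 * s))) := by
      rw [← Real.rpow_mul hBd0.le, ← Real.rpow_add hBd0]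
      congr 1
      field_simp
      ring
    have h3 : ((2 * (B * d)) : ℝ) ^ (β - 1) = (2 * B) ^ (β - 1) * d ^ (β - 1) := by
      rw [show (2:ℝ) * (B * d) = (2 * B) * d by ring, Real.mul_rpow h2B.le hd0.le]
    have h4 : d ^ (1 - β) * d ^ (β - 1) = 1 := by
      rw [← Real.rpow_add hd0]
      norm_num
    have h5 : ((2 * B) : ℝ) ^ (1 - β) * (2 * B) ^ (β - 1) = 1 := by
      rw [← Real.rpow_add h2B]
      norm_num
    calc 2 * s * d ^ (1 - β) * (2 * B) ^ (1 - β) * xBG s β γ d B t ^ (2 * s * (β - 1) - 1)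
        ≤ 2 * s * d ^ (1 - β) * (2 * B) ^ (1 - β)
          * ((2 * (B * d)) ^ (1 / (2 * s))) ^ (2 * s * (β - 1) - 1) := by
          apply mul_le_mul_of_nonneg_left h1
          have := Real.rpow_pos_of_pos hd0 (1 - β)
          have := Real.rpow_pos_of_pos h2B (1 - β)
          positivity
      _ = 2 * s * (2 * (B * d)) ^ (-(1 / (2 * s))) := by
          rw [h2, h3]
          calc 2 * s * d ^ (1 - β) * (2 * B) ^ (1 - β)
               * ((2 * B) ^ (β - 1) * d ^ (β - 1) * (2 * (B * d)) ^ (-(1 / (2 * s))))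
              = 2 * s * (d ^ (1 - β) * d ^ (β - 1)) * ((2 * B) ^ (1 - β) * (2 * B) ^ (β - 1))
                * (2 * (B * d)) ^ (-(1 / (2 * s))) := by ring
            _ = 2 * s * (2 * (B * d)) ^ (-(1 / (2 * s))) := by rw [h4, h5]; ring
  calc LG s β γ d B t ^ (2 * s)
      ≤ (2 * s * (2 * (B * d)) ^ (-(1 / (2 * s)))) ^ (2 * s) :=
        Real.rpow_le_rpow hL0.le hstep (by positivity)
    _ = (2 * s) ^ (2 * s) * (2 * (B * d))⁻¹ := by
        rw [Real.mul_rpow (by positivity) (by positivity), ← Real.rpow_mul hBd0.le]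
        have e : -(1 / (2 * s)) * (2 * s) = -1 := by field_simp
        rw [e, Real.rpow_neg_one]

/-- Claim 4.1: bounds on `(−Δ)^s m` in the region `x ≤ x_B(t) − 1`. -/
theorem mG_fracLap_left_region
    (s β γ d : ℝ)
    (hs0 : 0 < s) (hs1 : s < 1) (hβ : 1 < β) (hq : 2 * s * (β - 1) < 1)
    (hγ : 0 < γ) (hd0 : 0 < d) (hd1 : d < 1) :
    (1 / 2 < s → ∀ B > 1 / (2 * d), ∃ C₃ > (0 : ℝ),
      ∀ t > (0 : ℝ), ∀ x ≤ xBG s β γ d B t - 1,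
        fracLap s (mG s β γ d B t) x ≤
          -C₃ * (-(2 * s * d) * xBG s β γ d B t ^ (-(2 * s) - 1))
            * v0G s d (xBG s β γ d B t) ^ (-β)
            * wG s β γ d t (xBG s β γ d B t) ^ β) ∧
    (s ≤ 1 / 2 → ∃ B₀ > 1 / (2 * d), ∃ C₃ > (0 : ℝ), ∀ B ≥ B₀,
      ∀ t > (0 : ℝ), ∀ x ≤ xBG s β γ d B t - 1,
        fracLap s (mG s β γ d B t) x ≤ C₃ / B ^ 2) := by
  have hβ1 : (0:ℝ) < β - 1 := by linarith
  constructor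
  · -- case (a) : 1/2 < s
    intro hs2 B hB
    refine ⟨1 / (2 * s - 1), div_pos one_pos (by linarith), ?_⟩
    intro t ht x hx
    have hB0 : 0 < B := lt_trans (by positivity) hB
    have hc : 0 ≤ γ * (β - 1) * t := le_of_lt (by positivity)
    have hL0 : 0 < LG s β γ d B t := LG_pos s β γ d B t hs0 hβ hd0 hB hc
    have h1 := core_bound s β γ d B t x hs0 hs1 hβ hq hd0 hB hc hx
    have h2 := int_bound_a s B (LG s β γ d B t) hs2 hs1 hB0 hL0
    refine (h1.trans h2).trans (le_of_eq ?_)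
    rw [← rhs_id s β γ d B t hs0 hβ hd0 hB hc]
    ring
  · -- case (b) : s ≤ 1/2 (the argument works for all s ∈ (0,1))
    intro _
    have hA : (0:ℝ) < 1 / (2 - 2 * s) + 1 / (2 * s) := by
      have h1 : (0:ℝ) < 2 - 2 * s := by linarith
      positivity
    have h2s : (0:ℝ) < (2 * s) ^ (2 * s) := Real.rpow_pos_of_pos (by linarith) _
    refine ⟨1 / (2 * d) + 1, by linarith, (1 / (2 - 2 * s) + 1 / (2 * s)) * (2 * s) ^ (2 * s) / (4 * d),
      div_pos (mul_pos hA h2s) (by linarith), ?_⟩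
    intro B hBge t ht x hx
    have hB : 1 / (2 * d) < B := by linarith
    have hB0 : 0 < B := lt_trans (by positivity) hB
    have hc : 0 ≤ γ * (β - 1) * t := le_of_lt (by positivity)
    have hL0 : 0 < LG s β γ d B t := LG_pos s β γ d B t hs0 hβ hd0 hB hc
    have h1 := core_bound s β γ d B t x hs0 hs1 hβ hq hd0 hB hc hx
    have h2 := int_bound_b s B (LG s β γ d B t) hs0 hs1 hB0 hL0
    have h3 := LG_le s β γ d B t hs0 hβ hq hd0 hB hc
    refine (h1.trans h2).trans ?_
    have hBd0 : (0:ℝ) < 2 * (B * d) := by positivity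
    have step : 1 / (2 * B) * ((1 / (2 - 2 * s) + 1 / (2 * s)) * LG s β γ d B t ^ (2 * s))
        ≤ 1 / (2 * B) * ((1 / (2 - 2 * s) + 1 / (2 * s)) * ((2 * s) ^ (2 * s) * (2 * (B * d))⁻¹)) := by
      apply mul_le_mul_of_nonneg_left _ (by positivity)
      exact mul_le_mul_of_nonneg_left h3 hA.le
    refine step.trans (le_of_eq ?_)
    have hdne : d ≠ 0 := ne_of_gt hd0
    have hBne : B ≠ 0 := ne_of_gt hB0
    have hne1 : (2:ℝ) - 2 * s ≠ 0 := ne_of_gt (by linarith)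
    have hne2 : (2:ℝ) * s ≠ 0 := ne_of_gt (by linarith)
    field_simp
    ring
end

section
/- Under the setup CTX-S3, let f : [0,1] → [0,∞) satisfy f(u) ≥ r₂ · u^β · (1−u) for all u ∈ [0,1], for some r₂ > 0, and set C₀ := (r₂/2^β)·(1 − 1/(4B)). Then for all t>0: 0 < m(t,x) ≤ 1/(4B), and f(m(t,x)) ≥ C₀ · w(t, x_B(t))^β for every x ≤ x_B(t), while f(m(t,x)) ≥ C₀ · w(t,x)^β for every x > x_B(t). -/
open MeasureTheory Filter

lemma auxG (s β γ d B : ℝ) (hs0 : 0 < s) (hβ : 1 < β) (hγ : 0 < γ)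
    (hd0 : 0 < d) (hd1 : d < 1) (hB : 1 / (2 * d) < B) (t : ℝ) (ht : 0 ≤ t) :
    wG s β γ d t (xBG s β γ d B t) = 1 / (2 * B) ∧
    ∀ x, xBG s β γ d B t ≤ x → 0 < wG s β γ d t x ∧ wG s β γ d t x ≤ 1 / (2 * B) := by
  have hB0 : 0 < B := lt_trans (by positivity) hB
  have h2Bd : 1 < 2 * B * d := by
    have := (div_lt_iff₀ (by positivity : (0:ℝ) < 2 * d)).mp hB
    nlinarith
  have h2B1 : (1:ℝ) < 2 * B := by nlinarith
  have hβ' : 0 < β - 1 := by linarith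
  set A : ℝ := (2*B) ^ (β-1) + γ * (β-1) * t with hAdef
  have hpow2B : 0 < (2*B) ^ (β-1) := Real.rpow_pos_of_pos (by linarith) _
  have hA : (2*B) ^ (β-1) ≤ A := by
    have : 0 ≤ γ * (β-1) * t := by positivity
    linarith
  have hApos : 0 < A := lt_of_lt_of_le hpow2B hA
  set xB := xBG s β γ d B t with hxBdef
  have hxBval : xB = d ^ (1/(2*s)) * A ^ (1/(2*s*(β-1))) := rfl
  have hxBpos : 0 < xB := by rw [hxBval]; positivity
  have e1 : ((2*B) ^ (β-1)) ^ (1/(2*s*(β-1))) = (2*B) ^ (1/(2*s)) := by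
    rw [← Real.rpow_mul (by linarith : (0:ℝ) ≤ 2*B)]
    congr 1
    field_simp
  have hxB1 : 1 < xB := by
    have h1 : (2*B) ^ (1/(2*s)) ≤ A ^ (1/(2*s*(β-1))) := by
      rw [← e1]; exact Real.rpow_le_rpow hpow2B.le hA (by positivity)
    have h2 : (2*B*d) ^ (1/(2*s)) ≤ xB := by
      rw [hxBval]
      calc (2*B*d)^(1/(2*s)) = d^(1/(2*s)) * (2*B)^(1/(2*s)) := by
            rw [← Real.mul_rpow hd0.le (by linarith : (0:ℝ) ≤ 2*B)]; ring_nf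
        _ ≤ d^(1/(2*s)) * A^(1/(2*s*(β-1))) := by
            exact mul_le_mul_of_nonneg_left h1 (by positivity)
    have h3 : (1:ℝ) < (2*B*d) ^ (1/(2*s)) :=
      (Real.one_lt_rpow_iff_of_pos (by linarith)).mpr (Or.inl ⟨h2Bd, by positivity⟩)
    linarith
  have hv0 : ∀ x, xB ≤ x → v0G s d x ^ (1-β) = d^(1-β) * x ^ (2*s*(β-1)) := by
    intro x hx
    have hx1 : 1 < x := lt_of_lt_of_le hxB1 hx
    have hx0 : (0:ℝ) < x := by linarith
    rw [v0G, if_neg (by linarith)]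
    rw [Real.mul_rpow hd0.le (Real.rpow_nonneg hx0.le _), ← Real.rpow_mul hx0.le]
    congr 1
    ring
  have hxBpow : xB ^ (2*s*(β-1)) = d^(β-1) * A := by
    rw [hxBval, Real.mul_rpow (by positivity) (by positivity),
        ← Real.rpow_mul hd0.le, ← Real.rpow_mul hApos.le,
        show 1/(2*s) * (2*s*(β-1)) = β - 1 by field_simp,
        show 1/(2*s*(β-1)) * (2*s*(β-1)) = 1 by field_simp, Real.rpow_one]
  have hcanc : d^(1-β) * (d^(β-1) * A) = A := by
    rw [← mul_assoc, ← Real.rpow_add hd0, show (1-β)+(β-1) = 0 by ring,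
        Real.rpow_zero, one_mul]
  have hv0xB : v0G s d xB ^ (1-β) = A := by
    rw [hv0 xB le_rfl, hxBpow, hcanc]
  have epow : ((2*B) ^ (β-1)) ^ (-(1/(β-1))) = 1/(2*B) := by
    rw [← Real.rpow_mul (by linarith : (0:ℝ) ≤ 2*B),
        show (β-1) * -(1/(β-1)) = -1 by field_simp, Real.rpow_neg_one, one_div]
  have hwxB : wG s β γ d t xB = 1/(2*B) := by
    rw [wG, hv0xB, hAdef, add_sub_cancel_right, epow]
  refine ⟨hwxB, ?_⟩
  intro x hx
  have hx1 : 1 < x := lt_of_lt_of_le hxB1 hx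
  have hmono : xB ^ (2*s*(β-1)) ≤ x ^ (2*s*(β-1)) :=
    Real.rpow_le_rpow hxBpos.le hx (by positivity)
  have hinner : A ≤ v0G s d x ^ (1-β) := by
    rw [hv0 x hx]
    have h5 : d^(1-β) * xB ^ (2*s*(β-1)) ≤ d^(1-β) * x ^ (2*s*(β-1)) :=
      mul_le_mul_of_nonneg_left hmono (Real.rpow_nonneg hd0.le _)
    have h6 : d^(1-β) * xB ^ (2*s*(β-1)) = A := by rw [hxBpow, hcanc]
    linarith
  have hinner2 : (2*B)^(β-1) ≤ v0G s d x ^ (1-β) - γ*(β-1)*t := by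
    rw [hAdef] at hinner; linarith
  have hposi : 0 < v0G s d x ^ (1-β) - γ*(β-1)*t := lt_of_lt_of_le hpow2B hinner2
  refine ⟨Real.rpow_pos_of_pos hposi _, ?_⟩
  rw [wG]
  calc (v0G s d x ^ (1-β) - γ*(β-1)*t) ^ (-(1/(β-1)))
      ≤ ((2*B)^(β-1)) ^ (-(1/(β-1))) :=
        Real.rpow_le_rpow_of_nonpos hpow2B hinner2
          (neg_nonpos.mpr (by positivity))
    _ = 1/(2*B) := epow

/-- The reaction-term lower bound (4.4): `f(m) ≥ C₀ w(t,x_B(t))^β` for `x ≤ x_B(t)` and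
`f(m) ≥ C₀ w(t,x)^β` for `x > x_B(t)`, with `C₀ = (r₂/2^β)(1 − 1/(4B))`. -/
theorem reaction_lower_bound_on_mG
    (s β γ d B r₂ : ℝ) (f : ℝ → ℝ)
    (hs0 : 0 < s) (hs1 : s < 1) (hβ : 1 < β) (hq : 2 * s * (β - 1) < 1)
    (hγ : 0 < γ) (hd0 : 0 < d) (hd1 : d < 1) (hB : 1 / (2 * d) < B)
    (hr₂ : 0 < r₂)
    (hflow : ∀ u ∈ Set.Icc (0 : ℝ) 1, r₂ * u ^ β * (1 - u) ≤ f u)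
    (hfnn : ∀ u ∈ Set.Icc (0 : ℝ) 1, 0 ≤ f u) :
    ∀ t > (0 : ℝ), ∀ x : ℝ,
      (0 < mG s β γ d B t x ∧ mG s β γ d B t x ≤ 1 / (4 * B)) ∧
      (x ≤ xBG s β γ d B t →
        r₂ / 2 ^ β * (1 - 1 / (4 * B)) * wG s β γ d t (xBG s β γ d B t) ^ β
          ≤ f (mG s β γ d B t x)) ∧
      (xBG s β γ d B t < x →
        r₂ / 2 ^ β * (1 - 1 / (4 * B)) * wG s β γ d t x ^ β
          ≤ f (mG s β γ d B t x)) := by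
  intro t ht x
  obtain ⟨hw, hwle⟩ := auxG s β γ d B hs0 hβ hγ hd0 hd1 hB t ht.le
  have hB0 : 0 < B := lt_trans (by positivity) hB
  have h2Bd : 1 < 2 * B * d := by
    have := (div_lt_iff₀ (by positivity : (0:ℝ) < 2 * d)).mp hB
    nlinarith
  have h2B1 : (1:ℝ) < 2 * B := by nlinarith
  have hm1 : 1/(4*B) ≤ (1:ℝ)/2 := by
    rw [div_le_div_iff₀ (by linarith) two_pos]; linarith
  by_cases hxc : x ≤ xBG s β γ d B t
  · have hm : mG s β γ d B t x = 1/(4*B) := if_pos hxc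
    refine ⟨⟨by rw [hm]; positivity, le_of_eq hm⟩, ?_, ?_⟩
    · intro _
      have hmem : (1:ℝ)/(4*B) ∈ Set.Icc (0:ℝ) 1 := ⟨by positivity, by linarith⟩
      have hf := hflow _ hmem
      rw [hm, hw]
      have key : (1/(4*B):ℝ)^β = (1/(2*B))^β / 2^β := by
        rw [show (1/(4*B):ℝ) = (1/(2*B))/2 by ring,
            Real.div_rpow (by positivity) (by norm_num)]
      have h2 : (0:ℝ) < 2^β := Real.rpow_pos_of_pos two_pos β
      calc r₂/2^β * (1-1/(4*B)) * (1/(2*B))^β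
          = r₂ * (1/(4*B))^β * (1-1/(4*B)) := by rw [key]; field_simp
        _ ≤ f (1/(4*B)) := hf
    · intro hgt; exact absurd hgt (not_lt.mpr hxc)
  · push_neg at hxc
    obtain ⟨hw0, hwB⟩ := hwle x hxc.le
    set w := wG s β γ d t x with hwdef
    have hm : mG s β γ d B t x = w * (1 - B*w) := if_neg (not_le.mpr hxc)
    have hBw : B * w ≤ 1/2 := by
      calc B*w ≤ B*(1/(2*B)) := mul_le_mul_of_nonneg_left hwB hB0.le
        _ = 1/2 := by field_simp
    have hmlow : w/2 ≤ w * (1 - B*w) := by nlinarith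
    have hmpos : 0 < w * (1 - B*w) := by nlinarith
    have hmhigh : w * (1-B*w) ≤ 1/(4*B) := by
      rw [le_div_iff₀ (by positivity : (0:ℝ) < 4*B)]
      nlinarith [sq_nonneg (2*B*w - 1)]
    refine ⟨⟨by rw [hm]; exact hmpos, by rw [hm]; exact hmhigh⟩, ?_, ?_⟩
    · intro hle; exact absurd hxc (not_lt.mpr hle)
    · intro _
      have hmem : w * (1 - B*w) ∈ Set.Icc (0:ℝ) 1 := ⟨hmpos.le, by linarith⟩
      have hf := hflow _ hmem
      rw [hm]
      have hβ0 : (0:ℝ) ≤ β := by linarith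
      have hpow : (w/2)^β ≤ (w*(1-B*w))^β :=
        Real.rpow_le_rpow (by positivity) hmlow hβ0
      have hdiv : (w/2)^β = w^β/2^β := Real.div_rpow hw0.le (by norm_num : (0:ℝ) ≤ 2) β
      calc r₂/2^β * (1-1/(4*B)) * w^β
          = r₂ * ((w/2)^β * (1-1/(4*B))) := by rw [hdiv]; ring
        _ ≤ r₂ * ((w*(1-B*w))^β * (1-w*(1-B*w))) := by
            refine mul_le_mul_of_nonneg_left ?_ hr₂.le
            exact mul_le_mul hpow (by linarith) (by linarith)
              (Real.rpow_nonneg hmpos.le _)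
        _ = r₂ * (w*(1-B*w))^β * (1-w*(1-B*w)) := by ring
        _ ≤ f (w*(1-B*w)) := hf
end
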